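/- arXiv:2403.07288 — 7 statements merged into one kernel-verified Lean document; each statement's English description precedes it below -/
import Mathlib

section
/- The adjusted estimating function built from the inverse transition matrix is unbiased for the oracle estimating function: if every function ω ↦ U k (X ω) (k ∈ Fin K) is integrable, then 𝔼[φ(Y*, X)] = 𝔼[U(Y, X)], where φ i x = Σ_k (P⁻¹) k i • U k x. -/
open MeasureTheory Finset

/-- Partition lemma: integral of `g (Z ω) ω` splits as a sum over the fibers of `Z`. -/
lemma integral_partition_fin {Ω : Type*} [MeasurableSpace Ω] (ν : Measure Ω)
    {K d : ℕ} (Z : Ω → Fin K) (hZ : Measurable Z)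
    (g : Fin K → Ω → (Fin d → ℝ)) (hg : ∀ i, Integrable (g i) ν) :
    ∫ ω, g (Z ω) ω ∂ν = ∑ i : Fin K, ∫ ω in {ω | Z ω = i}, g i ω ∂ν := by
  have hrw : (fun ω => g (Z ω) ω)
      = fun ω => ∑ i : Fin K, Set.indicator {ω | Z ω = i} (g i) ω := by
    funext ω
    rw [Finset.sum_eq_single (Z ω)]
    · rw [Set.indicator_of_mem (by simp : ω ∈ {ω' | Z ω' = Z ω})]
    · intro i _ hi
      exact Set.indicator_of_notMem (by simpa using fun h => hi h.symm) _
    · simp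
  rw [hrw, integral_finset_sum]
  · exact Finset.sum_congr rfl fun i _ =>
      integral_indicator (hZ (measurableSet_singleton i))
  · exact fun i _ => (hg i).indicator (hZ (measurableSet_singleton i))

/-- The adjusted estimating function built from the inverse transition matrix is unbiased
for the oracle estimating function: `𝔼[φ(Y*, X)] = 𝔼[U(Y, X)]`, where
`φ i x = ∑ k, (P⁻¹) k i • U k x`. -/
theorem pram_adjusted_unbiased {Ω 𝒳 : Type*} [MeasurableSpace Ω] [MeasurableSpace 𝒳]
    (μ : Measure Ω) [IsProbabilityMeasure μ] {K d : ℕ}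
    (Y Ystar : Ω → Fin K) (X : Ω → 𝒳)
    (hY : Measurable Y) (hYstar : Measurable Ystar) (hX : Measurable X)
    (P : Matrix (Fin K) (Fin K) ℝ) (hP : IsUnit P.det)
    (hpram : ∀ (i j : Fin K) (A : Set 𝒳), MeasurableSet A →
      (μ {ω | Ystar ω = i ∧ Y ω = j ∧ X ω ∈ A}).toReal
        = P i j * (μ {ω | Y ω = j ∧ X ω ∈ A}).toReal)
    (U : Fin K → 𝒳 → (Fin d → ℝ)) (hU : ∀ k, Measurable (U k))
    (hUint : ∀ k : Fin K, Integrable (fun ω => U k (X ω)) μ)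
    (φ : Fin K → 𝒳 → (Fin d → ℝ))
    (hφ : ∀ i x, φ i x = ∑ k : Fin K, P⁻¹ k i • U k x) :
    ∫ ω, φ (Ystar ω) (X ω) ∂μ = ∫ ω, U (Y ω) (X ω) ∂μ := by
  classical
  have hSY : ∀ j : Fin K, MeasurableSet {ω | Y ω = j} :=
    fun j => hY (measurableSet_singleton j)
  have hSYs : ∀ i : Fin K, MeasurableSet {ω | Ystar ω = i} :=
    fun i => hYstar (measurableSet_singleton i)
  have hS : ∀ i j : Fin K, MeasurableSet {ω | Ystar ω = i ∧ Y ω = j} := by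
    intro i j
    have : {ω | Ystar ω = i ∧ Y ω = j} = {ω | Ystar ω = i} ∩ {ω | Y ω = j} := rfl
    rw [this]; exact (hSYs i).inter (hSY j)
  -- key identity transferring integrals via the PRAM mechanism
  have key : ∀ (i j k : Fin K),
      ∫ ω in {ω | Ystar ω = i ∧ Y ω = j}, U k (X ω) ∂μ
        = P i j • ∫ ω in {ω | Y ω = j}, U k (X ω) ∂μ := by
    intro i j k
    by_cases hj : μ {ω | Y ω = j} = 0
    · have h1 : μ {ω | Ystar ω = i ∧ Y ω = j} = 0 :=
        measure_mono_null (fun ω h => h.2) hj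
      rw [Measure.restrict_eq_zero.mpr h1, Measure.restrict_eq_zero.mpr hj]
      simp
    · have hU0 := hpram i j Set.univ MeasurableSet.univ
      simp only [Set.mem_univ, and_true] at hU0
      have hjpos : 0 < (μ {ω | Y ω = j}).toReal :=
        ENNReal.toReal_pos hj (measure_ne_top μ _)
      have hPij : 0 ≤ P i j := by
        have h0 : 0 ≤ (μ {ω | Ystar ω = i ∧ Y ω = j}).toReal := ENNReal.toReal_nonneg
        nlinarith [hU0]
      have hmeq : (μ.restrict {ω | Ystar ω = i ∧ Y ω = j}).map X
          = (ENNReal.ofReal (P i j)) • (μ.restrict {ω | Y ω = j}).map X := by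
        ext A hA
        rw [Measure.smul_apply, Measure.map_apply hX hA, Measure.map_apply hX hA,
          Measure.restrict_apply (hX hA), Measure.restrict_apply (hX hA)]
        have e1 : X ⁻¹' A ∩ {ω | Ystar ω = i ∧ Y ω = j}
            = {ω | Ystar ω = i ∧ Y ω = j ∧ X ω ∈ A} := by
          ext ω
          simp only [Set.mem_inter_iff, Set.mem_preimage, Set.mem_setOf_eq]
          tauto
        have e2 : X ⁻¹' A ∩ {ω | Y ω = j} = {ω | Y ω = j ∧ X ω ∈ A} := by
          ext ω; simp [Set.mem_preimage, and_comm]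
        rw [e1, e2]
        have hfin1 : μ {ω | Ystar ω = i ∧ Y ω = j ∧ X ω ∈ A} ≠ ⊤ := measure_ne_top μ _
        have hfin2 : ENNReal.ofReal (P i j) • μ {ω | Y ω = j ∧ X ω ∈ A} ≠ ⊤ := by
          simp only [smul_eq_mul]
          exact ENNReal.mul_ne_top ENNReal.ofReal_ne_top (measure_ne_top μ _)
        rw [← ENNReal.toReal_eq_toReal_iff' hfin1 hfin2]
        rw [hpram i j A hA]
        simp [ENNReal.toReal_mul, ENNReal.toReal_ofReal hPij]
      calc ∫ ω in {ω | Ystar ω = i ∧ Y ω = j}, U k (X ω) ∂μ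
          = ∫ x, U k x ∂((μ.restrict {ω | Ystar ω = i ∧ Y ω = j}).map X) :=
            (integral_map hX.aemeasurable (hU k).aestronglyMeasurable).symm
        _ = ∫ x, U k x ∂((ENNReal.ofReal (P i j)) • (μ.restrict {ω | Y ω = j}).map X) := by
            rw [hmeq]
        _ = (ENNReal.ofReal (P i j)).toReal • ∫ x, U k x ∂((μ.restrict {ω | Y ω = j}).map X) :=
            integral_smul_measure _ _
        _ = P i j • ∫ ω in {ω | Y ω = j}, U k (X ω) ∂μ := by
            rw [ENNReal.toReal_ofReal hPij,
              integral_map hX.aemeasurable (hU k).aestronglyMeasurable]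
  -- integrability of φ i ∘ X
  have hφint : ∀ i, Integrable (fun ω => φ i (X ω)) μ := by
    intro i
    simp only [hφ]
    exact integrable_finset_sum _ fun k _ => (hUint k).smul (P⁻¹ k i)
  -- decompose LHS over Ystar
  rw [integral_partition_fin μ Ystar hYstar (fun i ω => φ i (X ω)) hφint,
    integral_partition_fin μ Y hY (fun j ω => U j (X ω)) hUint]
  -- further decompose each term over Y
  have hdec : ∀ i : Fin K, ∫ ω in {ω | Ystar ω = i}, φ i (X ω) ∂μ
      = ∑ j : Fin K, ∫ ω in {ω | Ystar ω = i ∧ Y ω = j}, φ i (X ω) ∂μ := by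
    intro i
    rw [integral_partition_fin (μ.restrict {ω | Ystar ω = i}) Y hY
      (fun _ ω => φ i (X ω)) (fun _ => (hφint i).restrict)]
    refine Finset.sum_congr rfl fun j _ => ?_
    rw [Measure.restrict_restrict (hSY j)]
    have hset : {ω | Y ω = j} ∩ {ω | Ystar ω = i} = {ω | Ystar ω = i ∧ Y ω = j} := by
      ext ω
      simp only [Set.mem_inter_iff, Set.mem_setOf_eq]
      tauto
    rw [hset]
  simp only [hdec]
  have hterm : ∀ i j : Fin K, ∫ ω in {ω | Ystar ω = i ∧ Y ω = j}, φ i (X ω) ∂μ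
      = ∑ k : Fin K, (P⁻¹ k i * P i j) • ∫ ω in {ω | Y ω = j}, U k (X ω) ∂μ := by
    intro i j
    simp only [hφ]
    rw [integral_finset_sum]
    · refine Finset.sum_congr rfl fun k _ => ?_
      rw [integral_smul, key i j k, smul_smul]
    · intro k _
      exact ((hUint k).smul (P⁻¹ k i)).restrict
  simp only [hterm]
  rw [Finset.sum_comm]
  refine Finset.sum_congr rfl fun j _ => ?_
  rw [Finset.sum_comm]
  have hPP : P⁻¹ * P = 1 := Matrix.nonsing_inv_mul P hP
  have : ∀ k : Fin K, ∑ i : Fin K, (P⁻¹ k i * P i j) • ∫ ω in {ω | Y ω = j}, U k (X ω) ∂μ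
      = (if k = j then (1:ℝ) else 0) • ∫ ω in {ω | Y ω = j}, U k (X ω) ∂μ := by
    intro k
    rw [← Finset.sum_smul]
    congr 1
    have := congrArg (fun M => M k j) hPP
    simpa [Matrix.mul_apply, Matrix.one_apply] using this
  simp only [this, ite_smul, one_smul, zero_smul]
  simp
end

section
/- The proposed influence-type function has mean zero at the true parameter value: if every function ω ↦ U k (X ω) (k ∈ Fin K) is integrable and 𝔼[U(Y, X)] = 0, then 𝔼[φ(Y*, X)] = 0, where φ i x = Σ_k (P⁻¹) k i • U k x. -/
open MeasureTheory Finset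

/-! Split `𝔼[φ(Y*, X)]` along the values `i` of `Y*` and `j` of `Y`. By the PRAM condition, the
law of `X` on `{Y* = i, Y = j}` is `P i j` times its law on `{Y = j}`, so
`𝔼[φ(Y*, X)] = ∑ j, 𝔼[1{Y = j} ∑ i, P i j • φ i X]`. Since `φ` is built from `P⁻¹`, the inner sum
is `U j X`, and what remains is `𝔼[U(Y, X)] = 0`. -/

section
variable {Ω 𝒳 E : Type*} [MeasurableSpace Ω] [MeasurableSpace 𝒳]
  [NormedAddCommGroup E] [NormedSpace ℝ E] {μ : Measure Ω}

theorem integral_comp_eq_sum_setIntegral_preimage {ι : Type*} [Fintype ι] [MeasurableSpace ι]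
    [MeasurableSingletonClass ι] {Z : Ω → ι} (hZ : Measurable Z) {f : ι → Ω → E}
    (hf : ∀ i, IntegrableOn (f i) (Z ⁻¹' {i}) μ) :
    ∫ ω, f (Z ω) ω ∂μ = ∑ i, ∫ ω in Z ⁻¹' {i}, f i ω ∂μ := by
  have hfib : ∀ i, MeasurableSet (Z ⁻¹' {i}) := fun i => hZ (measurableSet_singleton i)
  have hZf : ∀ i, Set.EqOn (fun ω => f (Z ω) ω) (f i) (Z ⁻¹' {i}) := fun i ω hω =>
    congrArg (f · ω) hω
  rw [← setIntegral_univ, ← Set.preimage_univ (f := Z), ← Set.iUnion_of_singleton,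
    Set.preimage_iUnion, integral_iUnion_fintype hfib (pairwise_disjoint_fiber Z)
      fun i => (hf i).congr_fun (hZf i).symm (hfib i)]
  exact sum_congr rfl fun i _ => setIntegral_congr_fun (hfib i) (hZf i)

theorem map_restrict_eq_ofReal_smul [IsFiniteMeasure μ] {X : Ω → 𝒳} (hX : Measurable X)
    {S T : Set Ω} {c : ℝ}
    (h : ∀ A, MeasurableSet A → μ.real (S ∩ X ⁻¹' A) = c * μ.real (T ∩ X ⁻¹' A)) :
    (μ.restrict S).map X = ENNReal.ofReal c • (μ.restrict T).map X := by
  -- no sign condition on `c`: `ENNReal.ofReal_mul'` only needs the second factor nonnegative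
  ext A hA
  rw [Measure.smul_apply, Measure.map_apply hX hA, Measure.map_apply hX hA,
    Measure.restrict_apply (hX hA), Measure.restrict_apply (hX hA), smul_eq_mul,
    Set.inter_comm, Set.inter_comm _ T, ← ofReal_measureReal, h A hA,
    ENNReal.ofReal_mul' measureReal_nonneg, ofReal_measureReal]

theorem setIntegral_comp_eq_smul [IsFiniteMeasure μ] {X : Ω → 𝒳} (hX : Measurable X)
    {S T : Set Ω} {c : ℝ}
    (h : ∀ A, MeasurableSet A → μ.real (S ∩ X ⁻¹' A) = c * μ.real (T ∩ X ⁻¹' A))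
    {g : 𝒳 → E} (hg : StronglyMeasurable g) :
    ∫ ω in S, g (X ω) ∂μ = c • ∫ ω in T, g (X ω) ∂μ := by
  rcases le_or_gt 0 c with hc | hc
  · rw [← integral_map hX.aemeasurable hg.aestronglyMeasurable, map_restrict_eq_ofReal_smul hX h,
      integral_smul_measure, ENNReal.toReal_ofReal hc,
      integral_map hX.aemeasurable hg.aestronglyMeasurable]
  · have hST := h Set.univ MeasurableSet.univ
    simp only [Set.preimage_univ, Set.inter_univ] at hST
    have hT : μ.real T = 0 := by
      nlinarith [measureReal_nonneg (μ := μ) (s := S), measureReal_nonneg (μ := μ) (s := T)]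
    have hS : μ.real S = 0 := by rw [hST, hT, mul_zero]
    rw [measureReal_eq_zero_iff] at hS hT
    simp [Measure.restrict_eq_zero.mpr hS, Measure.restrict_eq_zero.mpr hT]

theorem setIntegral_comp_eq_sum_smul [IsFiniteMeasure μ] {X : Ω → 𝒳} (hX : Measurable X)
    {ι : Type*} [Fintype ι] [MeasurableSpace ι] [MeasurableSingletonClass ι] {Y : Ω → ι}
    (hY : Measurable Y) {S : Set Ω} {c : ι → ℝ}
    (h : ∀ j A, MeasurableSet A →
      μ.real (S ∩ Y ⁻¹' {j} ∩ X ⁻¹' A) = c j * μ.real (Y ⁻¹' {j} ∩ X ⁻¹' A))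
    {g : 𝒳 → E} (hg : StronglyMeasurable g) (hgS : IntegrableOn (fun ω => g (X ω)) S μ) :
    ∫ ω in S, g (X ω) ∂μ = ∑ j, c j • ∫ ω in Y ⁻¹' {j}, g (X ω) ∂μ := by
  rw [integral_comp_eq_sum_setIntegral_preimage (f := fun _ ω => g (X ω)) hY
    fun _ => hgS.integrableOn]
  refine sum_congr rfl fun j _ => ?_
  rw [Measure.restrict_restrict (hY (measurableSet_singleton j)), Set.inter_comm]
  exact setIntegral_comp_eq_smul hX (h j) hg

end

theorem Matrix.sum_smul_sum_inv_smul {n R M : Type*} [Fintype n] [DecidableEq n] [CommRing R]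
    [AddCommGroup M] [Module R M] (P : Matrix n n R) (hP : IsUnit P.det) (v : n → M) (j : n) :
    ∑ i, P i j • ∑ k, P⁻¹ k i • v k = v j := by
  simp_rw [smul_sum, smul_smul]
  rw [sum_comm]
  simp_rw [← sum_smul, mul_comm (P _ j), ← Matrix.mul_apply, Matrix.nonsing_inv_mul P hP,
    Matrix.one_apply, ite_smul, one_smul, zero_smul, sum_ite_eq', mem_univ, if_true]

/-- The proposed influence-type function has mean zero at the true parameter value:
if `𝔼[U(Y, X)] = 0`, then `𝔼[φ(Y*, X)] = 0`, where `φ i x = ∑ k, (P⁻¹) k i • U k x`. -/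
theorem pram_influence_mean_zero {Ω 𝒳 : Type*} [MeasurableSpace Ω] [MeasurableSpace 𝒳]
    (μ : Measure Ω) [IsProbabilityMeasure μ] {K d : ℕ}
    (Y Ystar : Ω → Fin K) (X : Ω → 𝒳)
    (hY : Measurable Y) (hYstar : Measurable Ystar) (hX : Measurable X)
    (P : Matrix (Fin K) (Fin K) ℝ) (hP : IsUnit P.det)
    (hpram : ∀ (i j : Fin K) (A : Set 𝒳), MeasurableSet A →
      (μ {ω | Ystar ω = i ∧ Y ω = j ∧ X ω ∈ A}).toReal
        = P i j * (μ {ω | Y ω = j ∧ X ω ∈ A}).toReal)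
    (U : Fin K → 𝒳 → (Fin d → ℝ)) (hU : ∀ k, Measurable (U k))
    (hUint : ∀ k : Fin K, Integrable (fun ω => U k (X ω)) μ)
    (hmean : ∫ ω, U (Y ω) (X ω) ∂μ = 0)
    (φ : Fin K → 𝒳 → (Fin d → ℝ))
    (hφ : ∀ i x, φ i x = ∑ k : Fin K, P⁻¹ k i • U k x) :
    ∫ ω, φ (Ystar ω) (X ω) ∂μ = 0 := by
  obtain rfl : φ = fun i x => ∑ k, P⁻¹ k i • U k x := funext₂ hφ
  have hφint (i : Fin K) : Integrable (fun ω => ∑ k, P⁻¹ k i • U k (X ω)) μ :=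
    integrable_finsetSum _ fun k _ => (hUint k).smul (P⁻¹ k i)
  have hφmeas (i : Fin K) : StronglyMeasurable fun x => ∑ k, P⁻¹ k i • U k x :=
    Finset.stronglyMeasurable_fun_sum _ fun k _ => (hU k).stronglyMeasurable.const_smul (P⁻¹ k i)
  have hmisclass (i j : Fin K) (A : Set 𝒳) (hA : MeasurableSet A) :
      μ.real (Ystar ⁻¹' {i} ∩ Y ⁻¹' {j} ∩ X ⁻¹' A) = P i j * μ.real (Y ⁻¹' {j} ∩ X ⁻¹' A) :=
    (congrArg μ.real (Set.ext fun _ => and_assoc)).trans (hpram i j A hA)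
  calc ∫ ω, ∑ k, P⁻¹ k (Ystar ω) • U k (X ω) ∂μ
      = ∑ i, ∫ ω in Ystar ⁻¹' {i}, ∑ k, P⁻¹ k i • U k (X ω) ∂μ :=
        integral_comp_eq_sum_setIntegral_preimage hYstar fun i => (hφint i).integrableOn
    _ = ∑ i, ∑ j, P i j • ∫ ω in Y ⁻¹' {j}, ∑ k, P⁻¹ k i • U k (X ω) ∂μ :=
        sum_congr rfl fun i _ => setIntegral_comp_eq_sum_smul hX hY (hmisclass i) (hφmeas i)
          (hφint i).integrableOn
    _ = ∑ j, ∫ ω in Y ⁻¹' {j}, U j (X ω) ∂μ := by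
        rw [sum_comm]
        refine sum_congr rfl fun j _ => ?_
        simp only [← integral_smul]
        rw [← integral_finsetSum (f := fun i ω => P i j • ∑ k, P⁻¹ k i • U k (X ω)) _
          fun i _ => ((hφint i).smul (P i j)).integrableOn]
        simp only [Matrix.sum_smul_sum_inv_smul P hP]
    _ = ∫ ω, U (Y ω) (X ω) ∂μ :=
        (integral_comp_eq_sum_setIntegral_preimage hY fun j => (hUint j).integrableOn).symm
    _ = 0 := hmean
end

section
/- The adjusted estimating function is conditionally unbiased given the true data: if every function ω ↦ U k (X ω) (k ∈ Fin K) is integrable, then the conditional expectation of ω ↦ φ(Y* ω, X ω) with respect to the σ-algebra generated by (Y, X) equals ω ↦ U (Y ω) (X ω) almost surely, where φ i x = Σ_k (P⁻¹) k i • U k x. -/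
open MeasureTheory Finset

lemma pram_key {Ω 𝒳 : Type*} [MeasurableSpace Ω] [MeasurableSpace 𝒳]
    (μ : Measure Ω) [IsProbabilityMeasure μ] {K d : ℕ}
    (Y Ystar : Ω → Fin K) (X : Ω → 𝒳)
    (hY : Measurable Y) (hYstar : Measurable Ystar) (hX : Measurable X)
    (P : Matrix (Fin K) (Fin K) ℝ)
    (hpram : ∀ (i j : Fin K) (A : Set 𝒳), MeasurableSet A →
      (μ {ω | Ystar ω = i ∧ Y ω = j ∧ X ω ∈ A}).toReal
        = P i j * (μ {ω | Y ω = j ∧ X ω ∈ A}).toReal)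
    (i j : Fin K) {A : Set 𝒳} (hA : MeasurableSet A)
    (h : 𝒳 → Fin d → ℝ) (hh : Measurable h) :
    ∫ ω in {ω | Ystar ω = i ∧ Y ω = j ∧ X ω ∈ A}, h (X ω) ∂μ
      = P i j • ∫ ω in {ω | Y ω = j ∧ X ω ∈ A}, h (X ω) ∂μ := by
  have S1meas : MeasurableSet {ω | Ystar ω = i ∧ Y ω = j} :=
    (hYstar (measurableSet_singleton i)).inter (hY (measurableSet_singleton j))
  have S2meas : MeasurableSet {ω | Y ω = j} := hY (measurableSet_singleton j)
  by_cases hc : 0 ≤ P i j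
  · -- measure equality
    have hmeq : Measure.map X (μ.restrict {ω | Ystar ω = i ∧ Y ω = j})
        = ENNReal.ofReal (P i j) • Measure.map X (μ.restrict {ω | Y ω = j}) := by
      ext B hB
      rw [Measure.smul_apply, Measure.map_apply hX hB, Measure.map_apply hX hB,
        Measure.restrict_apply (hX hB), Measure.restrict_apply (hX hB)]
      have e1 : X ⁻¹' B ∩ {ω | Ystar ω = i ∧ Y ω = j}
          = {ω | Ystar ω = i ∧ Y ω = j ∧ X ω ∈ B} := by
        ext ω; simp [Set.mem_preimage]; tauto
      have e2 : X ⁻¹' B ∩ {ω | Y ω = j} = {ω | Y ω = j ∧ X ω ∈ B} := by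
        ext ω; simp [Set.mem_preimage]; tauto
      rw [e1, e2]
      have hfin1 : μ {ω | Ystar ω = i ∧ Y ω = j ∧ X ω ∈ B} ≠ ⊤ := measure_ne_top μ _
      have hfin2 : ENNReal.ofReal (P i j) • μ {ω | Y ω = j ∧ X ω ∈ B} ≠ ⊤ :=
        ENNReal.mul_ne_top ENNReal.ofReal_ne_top (measure_ne_top μ _)
      rw [← ENNReal.toReal_eq_toReal_iff' hfin1 hfin2]
      rw [smul_eq_mul, ENNReal.toReal_mul, ENNReal.toReal_ofReal hc]
      exact hpram i j B hB
    have hres : ∀ (S : Set Ω), MeasurableSet S →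
        ∫ ω in X ⁻¹' A ∩ S, h (X ω) ∂μ = ∫ x in A, h x ∂(Measure.map X (μ.restrict S)) := by
      intro S hS
      rw [← Measure.restrict_restrict (hX hA),
        setIntegral_map hA hh.stronglyMeasurable.aestronglyMeasurable hX.aemeasurable]
    have e1 : {ω | Ystar ω = i ∧ Y ω = j ∧ X ω ∈ A}
        = X ⁻¹' A ∩ {ω | Ystar ω = i ∧ Y ω = j} := by
      ext ω; simp [Set.mem_preimage]; tauto
    have e2 : {ω | Y ω = j ∧ X ω ∈ A} = X ⁻¹' A ∩ {ω | Y ω = j} := by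
      ext ω; simp [Set.mem_preimage]; tauto
    rw [e1, e2, hres _ S1meas, hres _ S2meas, hmeq, Measure.restrict_smul,
      integral_smul_measure, ENNReal.toReal_ofReal hc]
  · -- negative case : μ {Y = j} = 0
    push_neg at hc
    have huniv := hpram i j Set.univ MeasurableSet.univ
    simp only [Set.mem_univ, and_true] at huniv
    have h2 : μ {ω | Y ω = j} = 0 := by
      have hle : P i j * (μ {ω | Y ω = j}).toReal ≥ 0 := huniv ▸ ENNReal.toReal_nonneg
      have : (μ {ω | Y ω = j}).toReal = 0 := by nlinarith [ENNReal.toReal_nonneg (a := μ {ω | Y ω = j})]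
      exact (ENNReal.toReal_eq_zero_iff _).mp this |>.resolve_right (measure_ne_top μ _)
    have z1 : μ {ω | Ystar ω = i ∧ Y ω = j ∧ X ω ∈ A} = 0 :=
      measure_mono_null (fun ω hω => hω.2.1) h2
    have z2 : μ {ω | Y ω = j ∧ X ω ∈ A} = 0 :=
      measure_mono_null (fun ω hω => hω.1) h2
    rw [Measure.restrict_eq_zero.mpr z1, Measure.restrict_eq_zero.mpr z2,
      integral_zero_measure]
    simp


/-- The adjusted estimating function is conditionally unbiased given the true data:
the conditional expectation of `ω ↦ φ(Y* ω, X ω)` with respect to the σ-algebra generated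
by `(Y, X)` equals `ω ↦ U (Y ω) (X ω)` almost surely, where
`φ i x = ∑ k, (P⁻¹) k i • U k x`. -/
theorem pram_conditionally_unbiased {Ω 𝒳 : Type*} [MeasurableSpace Ω] [MeasurableSpace 𝒳]
    (μ : Measure Ω) [IsProbabilityMeasure μ] {K d : ℕ}
    (Y Ystar : Ω → Fin K) (X : Ω → 𝒳)
    (hY : Measurable Y) (hYstar : Measurable Ystar) (hX : Measurable X)
    (P : Matrix (Fin K) (Fin K) ℝ) (hP : IsUnit P.det)
    (hpram : ∀ (i j : Fin K) (A : Set 𝒳), MeasurableSet A →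
      (μ {ω | Ystar ω = i ∧ Y ω = j ∧ X ω ∈ A}).toReal
        = P i j * (μ {ω | Y ω = j ∧ X ω ∈ A}).toReal)
    (U : Fin K → 𝒳 → (Fin d → ℝ)) (hU : ∀ k, Measurable (U k))
    (hUint : ∀ k : Fin K, Integrable (fun ω => U k (X ω)) μ)
    (φ : Fin K → 𝒳 → (Fin d → ℝ))
    (hφ : ∀ i x, φ i x = ∑ k : Fin K, P⁻¹ k i • U k x) :
    μ[fun ω => φ (Ystar ω) (X ω) |
        MeasurableSpace.comap (fun ω => (Y ω, X ω)) inferInstance]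
      =ᵐ[μ] fun ω => U (Y ω) (X ω) := by
  have hm : MeasurableSpace.comap (fun ω => (Y ω, X ω)) inferInstance
      ≤ ‹MeasurableSpace Ω› := by
    rintro s ⟨B, hB, rfl⟩
    exact (hY.prodMk hX) hB
  have hφm : ∀ i, Measurable (φ i) := by
    intro i
    have : φ i = fun x => ∑ k : Fin K, P⁻¹ k i • U k x := funext fun x => hφ i x
    rw [this]
    exact Finset.measurable_sum _ fun k _ => (hU k).const_smul (P⁻¹ k i)
  have hφint : ∀ i, Integrable (fun ω => φ i (X ω)) μ := by
    intro i
    have : (fun ω => φ i (X ω)) = fun ω => ∑ k : Fin K, P⁻¹ k i • U k (X ω) :=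
      funext fun ω => hφ i (X ω)
    rw [this]
    exact integrable_finset_sum _ fun k _ => (hUint k).smul (P⁻¹ k i)
  -- integrability of f
  have hfint : Integrable (fun ω => φ (Ystar ω) (X ω)) μ := by
    have hrepr : (fun ω => φ (Ystar ω) (X ω))
        = fun ω => ∑ i : Fin K,
            Set.indicator {ω | Ystar ω = i} (fun ω => φ i (X ω)) ω := by
      funext ω
      rw [Finset.sum_eq_single (Ystar ω)]
      · simp [Set.indicator_of_mem, Set.mem_setOf_eq]
      · intro b _ hb
        apply Set.indicator_of_notMem
        simp only [Set.mem_setOf_eq]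
        exact fun h => hb h.symm
      · simp
    rw [hrepr]
    exact integrable_finset_sum _ fun i _ =>
      (hφint i).indicator (hYstar (measurableSet_singleton i))
  -- integrability of g
  have hgint : Integrable (fun ω => U (Y ω) (X ω)) μ := by
    have hrepr : (fun ω => U (Y ω) (X ω))
        = fun ω => ∑ j : Fin K,
            Set.indicator {ω | Y ω = j} (fun ω => U j (X ω)) ω := by
      funext ω
      rw [Finset.sum_eq_single (Y ω)]
      · simp [Set.indicator_of_mem, Set.mem_setOf_eq]
      · intro b _ hb
        apply Set.indicator_of_notMem
        simp only [Set.mem_setOf_eq]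
        exact fun h => hb h.symm
      · simp
    rw [hrepr]
    exact integrable_finset_sum _ fun j _ =>
      (hUint j).indicator (hY (measurableSet_singleton j))
  -- strong measurability of g w.r.t. the comap σ-algebra
  have hYXm : Measurable[MeasurableSpace.comap (fun ω => (Y ω, X ω)) inferInstance]
      (fun ω => (Y ω, X ω)) := fun s hs => ⟨s, hs, rfl⟩
  have hUp : Measurable (fun p : Fin K × 𝒳 => U p.1 p.2) := by
    have : (fun p : Fin K × 𝒳 => U p.1 p.2)
        = fun p => ∑ k : Fin K, if p.1 = k then U k p.2 else 0 := by
      funext p; simp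
    rw [this]
    refine Finset.measurable_sum _ fun k _ => Measurable.ite ?_
      ((hU k).comp measurable_snd) measurable_const
    exact measurable_fst (measurableSet_singleton k)
  have hgm : AEStronglyMeasurable[
      (MeasurableSpace.comap (fun ω => (Y ω, X ω)) inferInstance)]
      (fun ω => U (Y ω) (X ω)) μ := by
    have hmeas : Measurable[MeasurableSpace.comap (fun ω => (Y ω, X ω)) inferInstance]
        (fun ω => U (Y ω) (X ω)) := hUp.comp hYXm
    exact hmeas.stronglyMeasurable.aestronglyMeasurable
  -- key pointwise identity
  have hid : ∀ (j : Fin K) (x : 𝒳), (∑ i : Fin K, P i j • φ i x) = U j x := by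
    intro j x
    have : (∑ i : Fin K, P i j • φ i x)
        = ∑ k : Fin K, ((P⁻¹ * P) k j) • U k x := by
      simp only [hφ, Finset.smul_sum, Matrix.mul_apply]
      rw [Finset.sum_comm]
      refine Finset.sum_congr rfl fun k _ => ?_
      rw [Finset.sum_smul]
      refine Finset.sum_congr rfl fun i _ => ?_
      rw [smul_smul, mul_comm (P i j)]
    rw [this, Matrix.nonsing_inv_mul P hP]
    simp [Matrix.one_apply]
  refine (ae_eq_condExp_of_forall_setIntegral_eq hm hfint
    (fun s _ _ => hgint.integrableOn) ?_ hgm).symm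
  rintro s ⟨B, hB, rfl⟩ -
  have hBj : ∀ j : Fin K, MeasurableSet {x | (j, x) ∈ B} :=
    fun j => measurable_prodMk_left hB
  have hTj : ∀ j : Fin K, MeasurableSet {ω | Y ω = j ∧ X ω ∈ {x | (j, x) ∈ B}} :=
    fun j => (hY (measurableSet_singleton j)).inter (hX (hBj j))
  have hsplit : (fun ω => (Y ω, X ω)) ⁻¹' B
      = ⋃ j ∈ Finset.univ (α := Fin K), {ω | Y ω = j ∧ X ω ∈ {x | (j, x) ∈ B}} := by
    ext ω
    simp only [Set.mem_iUnion, Set.mem_setOf_eq, Finset.mem_coe, Finset.mem_univ, true_and,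
      Set.mem_preimage, exists_prop]
    constructor
    · intro hω; exact ⟨Y ω, rfl, hω⟩
    · rintro ⟨j, rfl, hω⟩; exact hω
  have hdisj : ((Finset.univ : Finset (Fin K)) : Set (Fin K)).Pairwise
      (Function.onFun Disjoint (fun j => {ω | Y ω = j ∧ X ω ∈ {x | (j, x) ∈ B}})) := by
    intro a _ b _ hab
    refine Set.disjoint_left.mpr ?_
    rintro ω ⟨ha, -⟩ ⟨hb, -⟩
    exact hab (ha ▸ hb ▸ rfl)
  rw [hsplit,
    integral_biUnion_finset _ (fun j _ => hTj j) hdisj (fun j _ => hgint.integrableOn),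
    integral_biUnion_finset _ (fun j _ => hTj j) hdisj (fun j _ => hfint.integrableOn)]
  refine Finset.sum_congr rfl fun j _ => ?_
  have hgeq : ∫ ω in {ω | Y ω = j ∧ X ω ∈ {x | (j, x) ∈ B}}, U (Y ω) (X ω) ∂μ
      = ∫ ω in {ω | Y ω = j ∧ X ω ∈ {x | (j, x) ∈ B}}, U j (X ω) ∂μ := by
    refine setIntegral_congr_fun (hTj j) fun ω hω => ?_
    rw [hω.1]
  have hSi : ∀ i : Fin K,
      MeasurableSet {ω | Ystar ω = i ∧ Y ω = j ∧ X ω ∈ {x | (j, x) ∈ B}} :=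
    fun i => (hYstar (measurableSet_singleton i)).inter (hTj j)
  have hsplit2 : {ω | Y ω = j ∧ X ω ∈ {x | (j, x) ∈ B}}
      = ⋃ i ∈ Finset.univ (α := Fin K),
          {ω | Ystar ω = i ∧ Y ω = j ∧ X ω ∈ {x | (j, x) ∈ B}} := by
    ext ω
    simp only [Set.mem_iUnion, Set.mem_setOf_eq, Finset.mem_coe, Finset.mem_univ, true_and,
      exists_prop]
    constructor
    · intro hω; exact ⟨Ystar ω, rfl, hω⟩
    · rintro ⟨i, rfl, hω⟩; exact hω
  have hdisj2 : ((Finset.univ : Finset (Fin K)) : Set (Fin K)).Pairwise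
      (Function.onFun Disjoint
        (fun i => {ω | Ystar ω = i ∧ Y ω = j ∧ X ω ∈ {x | (j, x) ∈ B}})) := by
    intro a _ b _ hab
    refine Set.disjoint_left.mpr ?_
    rintro ω ⟨ha, -⟩ ⟨hb, -⟩
    exact hab (ha ▸ hb ▸ rfl)
  have hfib : ∫ ω in {ω | Y ω = j ∧ X ω ∈ {x | (j, x) ∈ B}}, φ (Ystar ω) (X ω) ∂μ
      = ∑ i : Fin K,
          ∫ ω in {ω | Ystar ω = i ∧ Y ω = j ∧ X ω ∈ {x | (j, x) ∈ B}},
            φ (Ystar ω) (X ω) ∂μ := by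
    rw [hsplit2]
    exact integral_biUnion_finset _ (fun i _ => hSi i) hdisj2 (fun i _ => hfint.integrableOn)
  have hstep : ∀ i : Fin K,
      ∫ ω in {ω | Ystar ω = i ∧ Y ω = j ∧ X ω ∈ {x | (j, x) ∈ B}}, φ (Ystar ω) (X ω) ∂μ
        = P i j • ∫ ω in {ω | Y ω = j ∧ X ω ∈ {x | (j, x) ∈ B}}, φ i (X ω) ∂μ := by
    intro i
    have heq : ∫ ω in {ω | Ystar ω = i ∧ Y ω = j ∧ X ω ∈ {x | (j, x) ∈ B}},
          φ (Ystar ω) (X ω) ∂μ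
        = ∫ ω in {ω | Ystar ω = i ∧ Y ω = j ∧ X ω ∈ {x | (j, x) ∈ B}}, φ i (X ω) ∂μ := by
      refine setIntegral_congr_fun (hSi i) fun ω hω => ?_
      rw [hω.1]
    rw [heq]
    exact pram_key μ Y Ystar X hY hYstar hX P hpram i j (hBj j) (φ i) (hφm i)
  rw [hgeq, hfib]
  simp only [hstep]
  have hsmul : ∀ i : Fin K,
      P i j • ∫ ω in {ω | Y ω = j ∧ X ω ∈ {x | (j, x) ∈ B}}, φ i (X ω) ∂μ
        = ∫ ω in {ω | Y ω = j ∧ X ω ∈ {x | (j, x) ∈ B}}, P i j • φ i (X ω) ∂μ :=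
    fun i => (integral_smul (P i j) _).symm
  simp only [hsmul]
  have hsum : ∑ i : Fin K, ∫ ω in {ω | Y ω = j ∧ X ω ∈ {x | (j, x) ∈ B}},
        P i j • φ i (X ω) ∂μ
      = ∫ ω in {ω | Y ω = j ∧ X ω ∈ {x | (j, x) ∈ B}},
          ∑ i : Fin K, P i j • φ i (X ω) ∂μ :=
    (integral_finset_sum _ (fun i _ =>
      Integrable.integrableOn ((hφint i).smul (P i j)))).symm
  rw [hsum]
  exact setIntegral_congr_fun (hTj j) fun ω _ => (hid j (X ω)).symm
end

section
/- The adjusted estimating function has the same conditional expectation given the covariate as the oracle estimating function: if every function ω ↦ U k (X ω) (k ∈ Fin K) is integrable, then the conditional expectation of ω ↦ φ(Y* ω, X ω) with respect to the σ-algebra generated by X equals the conditional expectation of ω ↦ U (Y ω) (X ω) with respect to the σ-algebra generated by X, almost surely, where φ i x = Σ_k (P⁻¹) k i • U k x. -/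
open MeasureTheory Finset

/-- The adjusted estimating function has the same conditional expectation given the covariate
as the oracle estimating function: `𝔼[φ(Y*, X) | σ(X)] = 𝔼[U(Y, X) | σ(X)]` almost surely,
where `φ i x = ∑ k, (P⁻¹) k i • U k x`. -/
theorem pram_same_condexp_given_covariate {Ω 𝒳 : Type*} [MeasurableSpace Ω]
    [MeasurableSpace 𝒳]
    (μ : Measure Ω) [IsProbabilityMeasure μ] {K d : ℕ}
    (Y Ystar : Ω → Fin K) (X : Ω → 𝒳)
    (hY : Measurable Y) (hYstar : Measurable Ystar) (hX : Measurable X)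
    (P : Matrix (Fin K) (Fin K) ℝ) (hP : IsUnit P.det)
    (hpram : ∀ (i j : Fin K) (A : Set 𝒳), MeasurableSet A →
      (μ {ω | Ystar ω = i ∧ Y ω = j ∧ X ω ∈ A}).toReal
        = P i j * (μ {ω | Y ω = j ∧ X ω ∈ A}).toReal)
    (U : Fin K → 𝒳 → (Fin d → ℝ)) (hU : ∀ k, Measurable (U k))
    (hUint : ∀ k : Fin K, Integrable (fun ω => U k (X ω)) μ)
    (φ : Fin K → 𝒳 → (Fin d → ℝ))
    (hφ : ∀ i x, φ i x = ∑ k : Fin K, P⁻¹ k i • U k x) :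
    μ[fun ω => φ (Ystar ω) (X ω) | MeasurableSpace.comap X inferInstance]
      =ᵐ[μ] μ[fun ω => U (Y ω) (X ω) | MeasurableSpace.comap X inferInstance] := by
  classical
  have hm : MeasurableSpace.comap X inferInstance ≤ ‹MeasurableSpace Ω› := hX.comap_le
  -- measurability and integrability of φ i ∘ X
  have hφmeas : ∀ i, Measurable (φ i) := by
    intro i
    rw [funext (hφ i)]
    exact Finset.measurable_sum _ fun k _ => (hU k).const_smul (P⁻¹ k i)
  have hφint : ∀ i, Integrable (fun ω => φ i (X ω)) μ := by
    intro i
    have h : (fun ω => φ i (X ω)) = fun ω => ∑ k : Fin K, P⁻¹ k i • U k (X ω) := by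
      funext ω; rw [hφ]
    rw [h]
    exact integrable_finset_sum _ fun k _ => (hUint k).smul (P⁻¹ k i)
  -- measurable level sets
  have hSY : ∀ j : Fin K, MeasurableSet {ω | Y ω = j} := fun j =>
    hY (measurableSet_singleton j)
  have hSYstar : ∀ i : Fin K, MeasurableSet {ω | Ystar ω = i} := fun i =>
    hYstar (measurableSet_singleton i)
  -- pointwise decomposition along a categorical variable
  have decomp : ∀ (Z : Ω → Fin K) (g : Fin K → Ω → Fin d → ℝ),
      (fun ω => g (Z ω) ω) = fun ω => ∑ i : Fin K, Set.indicator {ω' | Z ω' = i} (g i) ω := by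
    intro Z g
    funext ω
    simp only [Set.indicator_apply, Set.mem_setOf_eq]
    rw [Finset.sum_eq_single (Z ω)]
    · simp
    · intro b _ hb; simp [Ne.symm hb]
    · simp
  -- integrability of the two integrands
  have hfφint : Integrable (fun ω => φ (Ystar ω) (X ω)) μ := by
    rw [decomp Ystar (fun i ω => φ i (X ω))]
    exact integrable_finset_sum _ fun i _ => (hφint i).indicator (hSYstar i)
  have hfUint : Integrable (fun ω => U (Y ω) (X ω)) μ := by
    rw [decomp Y (fun j ω => U j (X ω))]
    exact integrable_finset_sum _ fun j _ => (hUint j).indicator (hSY j)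
  -- splitting a set integral along the level sets of Y
  have split : ∀ (s : Set Ω), MeasurableSet s → ∀ (h : Ω → Fin d → ℝ), Integrable h μ →
      ∫ ω in s, h ω ∂μ = ∑ j : Fin K, ∫ ω in s ∩ {ω' | Y ω' = j}, h ω ∂μ := by
    intro s hs h hh
    have hd : h = fun ω => ∑ j : Fin K, Set.indicator {ω' | Y ω' = j} h ω :=
      decomp Y (fun _ => h)
    calc ∫ ω in s, h ω ∂μ
        = ∫ ω in s, ∑ j : Fin K, Set.indicator {ω' | Y ω' = j} h ω ∂μ := by rw [← hd]
      _ = ∑ j : Fin K, ∫ ω in s, Set.indicator {ω' | Y ω' = j} h ω ∂μ :=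
          integral_finset_sum _ fun j _ => ((hh.indicator (hSY j)).integrableOn)
      _ = ∑ j : Fin K, ∫ ω in s ∩ {ω' | Y ω' = j}, h ω ∂μ := by
          refine Finset.sum_congr rfl fun j _ => ?_
          rw [setIntegral_indicator (hSY j)]
  -- key identity from the PRAM mechanism, upgraded from indicators to integrals
  have key : ∀ (i j : Fin K) (g : 𝒳 → Fin d → ℝ), Measurable g →
      ∀ A : Set 𝒳, MeasurableSet A →
      ∫ ω in ({ω | Ystar ω = i} ∩ {ω | Y ω = j}) ∩ X ⁻¹' A, g (X ω) ∂μ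
        = P i j • ∫ ω in {ω | Y ω = j} ∩ X ⁻¹' A, g (X ω) ∂μ := by
    intro i j g hg A hA
    have hT₁m : MeasurableSet ({ω | Ystar ω = i} ∩ {ω | Y ω = j}) :=
      (hSYstar i).inter (hSY j)
    have hsub : ({ω | Ystar ω = i} ∩ {ω | Y ω = j}) ⊆ {ω | Y ω = j} :=
      Set.inter_subset_right
    have hpram' : ∀ B : Set 𝒳, MeasurableSet B →
        (μ (({ω | Ystar ω = i} ∩ {ω | Y ω = j}) ∩ X ⁻¹' B)).toReal
          = P i j * (μ ({ω | Y ω = j} ∩ X ⁻¹' B)).toReal := by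
      intro B hB
      have h1 : ({ω | Ystar ω = i} ∩ {ω | Y ω = j}) ∩ X ⁻¹' B
          = {ω | Ystar ω = i ∧ Y ω = j ∧ X ω ∈ B} := by
        ext ω; simp [Set.mem_setOf_eq, and_assoc]
      have h2 : {ω | Y ω = j} ∩ X ⁻¹' B = {ω | Y ω = j ∧ X ω ∈ B} := by
        ext ω; simp [Set.mem_setOf_eq]
      rw [h1, h2]
      exact hpram i j B hB
    by_cases hT₂0 : μ {ω | Y ω = j} = 0
    · have hT₁0 : μ (({ω | Ystar ω = i} ∩ {ω | Y ω = j}) ∩ X ⁻¹' A) = 0 :=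
        measure_mono_null (Set.inter_subset_left.trans hsub) hT₂0
      have hT₂0' : μ ({ω | Y ω = j} ∩ X ⁻¹' A) = 0 :=
        measure_mono_null Set.inter_subset_left hT₂0
      rw [Measure.restrict_eq_zero.mpr hT₁0, Measure.restrict_eq_zero.mpr hT₂0']
      simp
    · -- P i j ≥ 0
      have huniv := hpram' Set.univ MeasurableSet.univ
      simp only [Set.preimage_univ, Set.inter_univ] at huniv
      have hT₂pos : 0 < (μ {ω | Y ω = j}).toReal :=
        ENNReal.toReal_pos hT₂0 (measure_ne_top μ _)
      have hc : 0 ≤ P i j := by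
        by_contra hneg
        push_neg at hneg
        have h1 : (μ ({ω | Ystar ω = i} ∩ {ω | Y ω = j})).toReal < 0 := by nlinarith
        exact absurd h1 (not_lt.mpr ENNReal.toReal_nonneg)
      -- equality of the pushforward measures
      have hmeq : Measure.map X (μ.restrict ({ω | Ystar ω = i} ∩ {ω | Y ω = j}))
          = ENNReal.ofReal (P i j) • Measure.map X (μ.restrict {ω | Y ω = j}) := by
        ext B hB
        rw [Measure.smul_apply, smul_eq_mul,
          Measure.map_apply hX hB, Measure.map_apply hX hB,
          Measure.restrict_apply (hX hB), Measure.restrict_apply (hX hB),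
          Set.inter_comm (X ⁻¹' B)]
        rw [Set.inter_comm (X ⁻¹' B)]
        have hne1 : μ (({ω | Ystar ω = i} ∩ {ω | Y ω = j}) ∩ X ⁻¹' B) ≠ ⊤ :=
          measure_ne_top μ _
        have hne2 : ENNReal.ofReal (P i j) * μ ({ω | Y ω = j} ∩ X ⁻¹' B) ≠ ⊤ :=
          ENNReal.mul_ne_top ENNReal.ofReal_ne_top (measure_ne_top μ _)
        refine (ENNReal.toReal_eq_toReal_iff' hne1 hne2).mp ?_
        rw [ENNReal.toReal_mul, ENNReal.toReal_ofReal hc]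
        exact hpram' B hB
      -- transfer the integral identity
      have e₁ : ∫ ω in ({ω | Ystar ω = i} ∩ {ω | Y ω = j}) ∩ X ⁻¹' A, g (X ω) ∂μ
          = ∫ x in A, g x ∂(Measure.map X (μ.restrict ({ω | Ystar ω = i} ∩ {ω | Y ω = j}))) := by
        rw [setIntegral_map hA hg.aestronglyMeasurable hX.aemeasurable,
          Measure.restrict_restrict (hX hA), Set.inter_comm]
      have e₂ : ∫ ω in {ω | Y ω = j} ∩ X ⁻¹' A, g (X ω) ∂μ
          = ∫ x in A, g x ∂(Measure.map X (μ.restrict {ω | Y ω = j})) := by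
        rw [setIntegral_map hA hg.aestronglyMeasurable hX.aemeasurable,
          Measure.restrict_restrict (hX hA), Set.inter_comm]
      rw [e₁, e₂, hmeq, Measure.restrict_smul, integral_smul_measure,
        ENNReal.toReal_ofReal hc]
  -- the main set-integral equality
  have main : ∀ A : Set 𝒳, MeasurableSet A →
      ∫ ω in X ⁻¹' A, φ (Ystar ω) (X ω) ∂μ = ∫ ω in X ⁻¹' A, U (Y ω) (X ω) ∂μ := by
    intro A hA
    have hXA : MeasurableSet (X ⁻¹' A) := hX hA
    -- right-hand side
    have hR : ∫ ω in X ⁻¹' A, U (Y ω) (X ω) ∂μ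
        = ∑ j : Fin K, ∫ ω in {ω' | Y ω' = j} ∩ X ⁻¹' A, U j (X ω) ∂μ := by
      rw [split _ hXA _ hfUint]
      refine Finset.sum_congr rfl fun j _ => ?_
      rw [Set.inter_comm]
      refine setIntegral_congr_fun ((hSY j).inter hXA) fun ω hω => ?_
      have : Y ω = j := hω.1
      rw [this]
    -- left-hand side
    have hL : ∫ ω in X ⁻¹' A, φ (Ystar ω) (X ω) ∂μ
        = ∑ i : Fin K, ∑ j : Fin K,
            P i j • ∑ k : Fin K, P⁻¹ k i • ∫ ω in {ω' | Y ω' = j} ∩ X ⁻¹' A, U k (X ω) ∂μ := by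
      rw [decomp Ystar (fun i ω => φ i (X ω)), integral_finset_sum _
        (fun i _ => ((hφint i).indicator (hSYstar i)).integrableOn)]
      refine Finset.sum_congr rfl fun i _ => ?_
      rw [setIntegral_indicator (hSYstar i), split _ (hXA.inter (hSYstar i)) _ (hφint i)]
      refine Finset.sum_congr rfl fun j _ => ?_
      have hset : X ⁻¹' A ∩ {ω' | Ystar ω' = i} ∩ {ω' | Y ω' = j}
          = ({ω | Ystar ω = i} ∩ {ω | Y ω = j}) ∩ X ⁻¹' A := by
        ext ω
        simp only [Set.mem_inter_iff, Set.mem_setOf_eq, Set.mem_preimage]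
        tauto
      rw [hset, key i j (φ i) (hφmeas i) A hA]
      congr 1
      have h : (fun ω => φ i (X ω)) = fun ω => ∑ k : Fin K, P⁻¹ k i • U k (X ω) := by
        funext ω; rw [hφ]
      rw [h, integral_finset_sum]
      · refine Finset.sum_congr rfl fun k _ => ?_
        rw [integral_smul]
      · exact fun k _ => ((hUint k).smul (P⁻¹ k i)).integrableOn
    rw [hL, hR, Finset.sum_comm]
    refine Finset.sum_congr rfl fun j _ => ?_
    calc ∑ i : Fin K, P i j • ∑ k : Fin K,
            P⁻¹ k i • ∫ ω in {ω' | Y ω' = j} ∩ X ⁻¹' A, U k (X ω) ∂μ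
        = ∑ i : Fin K, ∑ k : Fin K,
            (P⁻¹ k i * P i j) • ∫ ω in {ω' | Y ω' = j} ∩ X ⁻¹' A, U k (X ω) ∂μ := by
          refine Finset.sum_congr rfl fun i _ => ?_
          rw [Finset.smul_sum]
          refine Finset.sum_congr rfl fun k _ => ?_
          rw [smul_smul, mul_comm]
      _ = ∑ k : Fin K, (∑ i : Fin K, P⁻¹ k i * P i j)
            • ∫ ω in {ω' | Y ω' = j} ∩ X ⁻¹' A, U k (X ω) ∂μ := by
          rw [Finset.sum_comm]
          refine Finset.sum_congr rfl fun k _ => ?_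
          rw [Finset.sum_smul]
      _ = ∑ k : Fin K, ((P⁻¹ * P) k j) • ∫ ω in {ω' | Y ω' = j} ∩ X ⁻¹' A, U k (X ω) ∂μ := by
          refine Finset.sum_congr rfl fun k _ => ?_
          rw [Matrix.mul_apply]
      _ = ∫ ω in {ω' | Y ω' = j} ∩ X ⁻¹' A, U j (X ω) ∂μ := by
          rw [Matrix.nonsing_inv_mul P hP]
          simp [Matrix.one_apply, ite_smul]
  -- conclude via uniqueness of conditional expectation
  refine ae_eq_condExp_of_forall_setIntegral_eq hm hfUint
    (fun s _ _ => integrable_condExp.integrableOn) ?_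
    (StronglyMeasurable.aestronglyMeasurable stronglyMeasurable_condExp)
  intro s hs _
  obtain ⟨A, hA, rfl⟩ := hs
  rw [setIntegral_condExp hm hfφint ⟨A, hA, rfl⟩]
  exact main A hA
end

section
/- The cross term between the adjustment error and the oracle estimating function vanishes: if every coordinate of ω ↦ U k (X ω) (k ∈ Fin K) is square-integrable, then for all coordinates a, b ∈ Fin d, 𝔼[(φ(Y*, X)_a − U(Y, X)_a) · U(Y, X)_b] = 0, where φ i x = Σ_k (P⁻¹) k i • U k x. -/
open MeasureTheory Finset


theorem aux_smul_like {𝒳 : Type*} [MeasurableSpace 𝒳] {ν₁ ν₂ : Measure 𝒳}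
    [IsFiniteMeasure ν₁] [IsFiniteMeasure ν₂] {c : ℝ}
    (h : ∀ A, MeasurableSet A → (ν₁ A).toReal = c * (ν₂ A).toReal) (f : 𝒳 → ℝ) :
    ∫ x, f x ∂ν₁ = c * ∫ x, f x ∂ν₂ := by
  rcases le_or_gt 0 c with hc | hc
  · have hν : ν₁ = ENNReal.ofReal c • ν₂ := by
      ext A hA
      have h1 := h A hA
      have hfin1 : ν₁ A ≠ ⊤ := measure_ne_top _ _
      have hfin2 : ν₂ A ≠ ⊤ := measure_ne_top _ _
      rw [Measure.smul_apply, smul_eq_mul]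
      rw [← ENNReal.toReal_eq_toReal_iff' hfin1 (by finiteness)]
      rw [h1, ENNReal.toReal_mul, ENNReal.toReal_ofReal hc]
    rw [hν, integral_smul_measure, ENNReal.toReal_ofReal hc, smul_eq_mul]
  · have hν2 : ν₂ = 0 := by
      ext A hA
      have h1 := h A hA
      by_contra hne
      have hpos : 0 < (ν₂ A).toReal := ENNReal.toReal_pos hne (measure_ne_top _ _)
      nlinarith [ENNReal.toReal_nonneg (a := ν₁ A)]
    have hν1 : ν₁ = 0 := by
      ext A hA
      have h1 := h A hA
      rw [hν2] at h1
      simp at h1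
      exact (ENNReal.toReal_eq_zero_iff _).mp h1 |>.resolve_right (measure_ne_top _ _)
    simp [hν1, hν2]

theorem aux_partition {Ω : Type*} [MeasurableSpace Ω] (μ : Measure Ω) {ι : Type*}
    [Fintype ι] [MeasurableSpace ι] [MeasurableSingletonClass ι]
    (Z : Ω → ι) (hZ : Measurable Z) (f : Ω → ℝ) (hf : Integrable f μ) :
    ∫ ω, f ω ∂μ = ∑ i, ∫ ω in {ω | Z ω = i}, f ω ∂μ := by
  have hmeas : ∀ i, MeasurableSet {ω | Z ω = i} := fun i => hZ (measurableSet_singleton i)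
  have hpt : ∀ ω, f ω = ∑ i, Set.indicator {ω | Z ω = i} f ω := by
    intro ω
    rw [Finset.sum_eq_single (Z ω)]
    · simp [Set.indicator_apply]
    · intro b _ hb
      exact Set.indicator_of_notMem (fun h => hb h.symm) f
    · simp
  calc ∫ ω, f ω ∂μ = ∫ ω, ∑ i, Set.indicator {ω | Z ω = i} f ω ∂μ := by
        exact integral_congr_ae (Filter.Eventually.of_forall hpt)
    _ = ∑ i, ∫ ω, Set.indicator {ω | Z ω = i} f ω ∂μ :=
        integral_finset_sum _ (fun i _ => hf.indicator (hmeas i))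
    _ = ∑ i, ∫ ω in {ω | Z ω = i}, f ω ∂μ := by
        exact Finset.sum_congr rfl (fun i _ => integral_indicator (hmeas i))

/-- The cross term between the adjustment error and the oracle estimating function vanishes:
for all coordinates `a b : Fin d`,
`𝔼[(φ(Y*, X)_a − U(Y, X)_a) * U(Y, X)_b] = 0`, where `φ i x = ∑ k, (P⁻¹) k i • U k x`. -/
theorem pram_cross_term_vanishes {Ω 𝒳 : Type*} [MeasurableSpace Ω] [MeasurableSpace 𝒳]
    (μ : Measure Ω) [IsProbabilityMeasure μ] {K d : ℕ}
    (Y Ystar : Ω → Fin K) (X : Ω → 𝒳)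
    (hY : Measurable Y) (hYstar : Measurable Ystar) (hX : Measurable X)
    (P : Matrix (Fin K) (Fin K) ℝ) (hP : IsUnit P.det)
    (hpram : ∀ (i j : Fin K) (A : Set 𝒳), MeasurableSet A →
      (μ {ω | Ystar ω = i ∧ Y ω = j ∧ X ω ∈ A}).toReal
        = P i j * (μ {ω | Y ω = j ∧ X ω ∈ A}).toReal)
    (U : Fin K → 𝒳 → (Fin d → ℝ)) (hU : ∀ k, Measurable (U k))
    (hUsq : ∀ (k : Fin K) (a : Fin d), MemLp (fun ω => U k (X ω) a) 2 μ)
    (φ : Fin K → 𝒳 → (Fin d → ℝ))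
    (hφ : ∀ i x, φ i x = ∑ k : Fin K, P⁻¹ k i • U k x) :
    ∀ a b : Fin d,
      ∫ ω, (φ (Ystar ω) (X ω) a - U (Y ω) (X ω) a) * U (Y ω) (X ω) b ∂μ = 0 := by
  intro a b
  -- measurability of coordinate functions
  have hUm : ∀ (k : Fin K) (c : Fin d), Measurable (fun x => U k x c) :=
    fun k c => (measurable_pi_apply c).comp (hU k)
  have hφm : ∀ (i : Fin K) (c : Fin d), Measurable (fun x => φ i x c) := by
    intro i c
    simp only [hφ, Finset.sum_apply, Pi.smul_apply, smul_eq_mul]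
    exact Finset.measurable_sum _ (fun k _ => (hUm k c).const_mul _)
  have hmul : ∀ (f g : Ω → ℝ), MemLp f 2 μ → MemLp g 2 μ →
      Integrable (fun ω => f ω * g ω) μ := by
    intro f g hf hg
    have h : MemLp (f • g) 1 μ :=
      hg.smul hf (p := 2) (q := 2) (r := 1) (hpqr := ⟨by simp [ENNReal.inv_two_add_inv_two]⟩)
    exact h.integrable le_rfl
  -- integrability of products
  have hUU : ∀ (k k' : Fin K), Integrable (fun ω => U k (X ω) a * U k' (X ω) b) μ :=
    fun k k' => hmul _ _ (hUsq k a) (hUsq k' b)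
  have hφmem : ∀ i : Fin K, MemLp (fun ω => φ i (X ω) a) 2 μ := by
    intro i
    have : (fun ω => φ i (X ω) a) = fun ω => ∑ k : Fin K, P⁻¹ k i * U k (X ω) a := by
      funext ω; simp [hφ]
    rw [this]
    have h := memLp_finset_sum' (μ := μ) (Finset.univ)
      (f := fun (k : Fin K) (ω : Ω) => P⁻¹ k i * U k (X ω) a)
      (fun k _ => (hUsq k a).const_mul _)
    have he : (∑ k : Fin K, fun ω => P⁻¹ k i * U k (X ω) a)
        = fun ω => ∑ k : Fin K, P⁻¹ k i * U k (X ω) a := by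
      funext ω; simp
    rwa [he] at h
  have hφU : ∀ (i j : Fin K), Integrable (fun ω => φ i (X ω) a * U j (X ω) b) μ :=
    fun i j => hmul _ _ (hφmem i) (hUsq j b)
  -- measurable sets
  have hmS : ∀ i j : Fin K, MeasurableSet {ω | Ystar ω = i ∧ Y ω = j} := by
    intro i j
    exact (hYstar (measurableSet_singleton i)).inter (hY (measurableSet_singleton j))
  have hmT : ∀ j : Fin K, MeasurableSet {ω | Y ω = j} :=
    fun j => hY (measurableSet_singleton j)
  -- PRAM transfer for set integrals
  have transfer : ∀ (i j : Fin K) (h : 𝒳 → ℝ), Measurable h →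
      ∫ ω in {ω | Ystar ω = i ∧ Y ω = j}, h (X ω) ∂μ
        = P i j * ∫ ω in {ω | Y ω = j}, h (X ω) ∂μ := by
    intro i j h hm
    set ν₁ : Measure 𝒳 := Measure.map X (μ.restrict {ω | Ystar ω = i ∧ Y ω = j}) with hν₁
    set ν₂ : Measure 𝒳 := Measure.map X (μ.restrict {ω | Y ω = j}) with hν₂
    haveI : IsFiniteMeasure ν₁ := by
      constructor
      rw [hν₁, Measure.map_apply hX MeasurableSet.univ]
      exact lt_of_le_of_lt (measure_mono (Set.subset_univ _))
        (lt_of_le_of_lt (Measure.restrict_le_self _) (measure_lt_top μ _))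
    haveI : IsFiniteMeasure ν₂ := by
      constructor
      rw [hν₂, Measure.map_apply hX MeasurableSet.univ]
      exact lt_of_le_of_lt (measure_mono (Set.subset_univ _))
        (lt_of_le_of_lt (Measure.restrict_le_self _) (measure_lt_top μ _))
    have e1 : ∫ ω in {ω | Ystar ω = i ∧ Y ω = j}, h (X ω) ∂μ = ∫ x, h x ∂ν₁ :=
      (integral_map hX.aemeasurable hm.aestronglyMeasurable).symm
    have e2 : ∫ ω in {ω | Y ω = j}, h (X ω) ∂μ = ∫ x, h x ∂ν₂ :=
      (integral_map hX.aemeasurable hm.aestronglyMeasurable).symm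
    rw [e1, e2]
    apply aux_smul_like
    intro A hA
    rw [hν₁, hν₂, Measure.map_apply hX hA, Measure.map_apply hX hA,
      Measure.restrict_apply (hX hA), Measure.restrict_apply (hX hA)]
    have s1 : X ⁻¹' A ∩ {ω | Ystar ω = i ∧ Y ω = j} = {ω | Ystar ω = i ∧ Y ω = j ∧ X ω ∈ A} := by
      ext ω; simp only [Set.mem_inter_iff, Set.mem_preimage, Set.mem_setOf_eq]; tauto
    have s2 : X ⁻¹' A ∩ {ω | Y ω = j} = {ω | Y ω = j ∧ X ω ∈ A} := by
      ext ω; simp only [Set.mem_inter_iff, Set.mem_preimage, Set.mem_setOf_eq]; tauto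
    rw [s1, s2]
    exact hpram i j A hA
  -- integrability of the two composite integrands
  have hg1eq : (fun ω => φ (Ystar ω) (X ω) a * U (Y ω) (X ω) b)
      = fun ω => ∑ p : Fin K × Fin K,
          Set.indicator {ω | Ystar ω = p.1 ∧ Y ω = p.2}
            (fun ω => φ p.1 (X ω) a * U p.2 (X ω) b) ω := by
    funext ω
    rw [Finset.sum_eq_single (Ystar ω, Y ω)]
    · simp [Set.indicator_apply]
    · intro p _ hp
      apply Set.indicator_of_notMem
      intro hmem
      exact hp (Prod.ext hmem.1.symm hmem.2.symm)
    · simp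
  have hg2eq : (fun ω => U (Y ω) (X ω) a * U (Y ω) (X ω) b)
      = fun ω => ∑ j : Fin K,
          Set.indicator {ω | Y ω = j} (fun ω => U j (X ω) a * U j (X ω) b) ω := by
    funext ω
    rw [Finset.sum_eq_single (Y ω)]
    · simp [Set.indicator_apply]
    · intro j _ hj
      exact Set.indicator_of_notMem (fun hmem => hj hmem.symm) _
    · simp
  have hg1int : Integrable (fun ω => φ (Ystar ω) (X ω) a * U (Y ω) (X ω) b) μ := by
    rw [hg1eq]
    exact integrable_finset_sum _ (fun p _ => (hφU p.1 p.2).indicator (hmS p.1 p.2))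
  have hg2int : Integrable (fun ω => U (Y ω) (X ω) a * U (Y ω) (X ω) b) μ := by
    rw [hg2eq]
    exact integrable_finset_sum _ (fun j _ => (hUU j j).indicator (hmT j))
  -- split the integral
  have hsplit : ∫ ω, (φ (Ystar ω) (X ω) a - U (Y ω) (X ω) a) * U (Y ω) (X ω) b ∂μ
      = (∫ ω, φ (Ystar ω) (X ω) a * U (Y ω) (X ω) b ∂μ)
        - ∫ ω, U (Y ω) (X ω) a * U (Y ω) (X ω) b ∂μ := by
    rw [← integral_sub hg1int hg2int]
    congr 1; funext ω; ring
  rw [hsplit]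
  -- abbreviation
  set A : Fin K → Fin K → ℝ :=
    fun j k => ∫ ω in {ω | Y ω = j}, U k (X ω) a * U j (X ω) b ∂μ with hA
  -- compute I₂
  have hZ : Measurable (fun ω => (Ystar ω, Y ω)) := hYstar.prodMk hY
  have hI2 : ∫ ω, U (Y ω) (X ω) a * U (Y ω) (X ω) b ∂μ = ∑ j, A j j := by
    rw [aux_partition μ Y hY _ hg2int]
    apply Finset.sum_congr rfl
    intro j _
    apply setIntegral_congr_fun (hmT j)
    intro ω hω
    simp only [Set.mem_setOf_eq] at hω
    dsimp only
    rw [hω]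
  -- compute I₁
  have hI1 : ∫ ω, φ (Ystar ω) (X ω) a * U (Y ω) (X ω) b ∂μ
      = ∑ i, ∑ j, P i j * ∑ k, P⁻¹ k i * A j k := by
    rw [aux_partition μ (fun ω => (Ystar ω, Y ω)) hZ _ hg1int, ← Fintype.sum_prod_type']
    apply Finset.sum_congr rfl
    intro p _
    obtain ⟨i, j⟩ := p
    have hset : {ω | (Ystar ω, Y ω) = (i, j)} = {ω | Ystar ω = i ∧ Y ω = j} := by
      ext ω; simp [Prod.ext_iff]
    rw [hset]
    have step1 : ∫ ω in {ω | Ystar ω = i ∧ Y ω = j},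
        φ (Ystar ω) (X ω) a * U (Y ω) (X ω) b ∂μ
        = ∫ ω in {ω | Ystar ω = i ∧ Y ω = j}, φ i (X ω) a * U j (X ω) b ∂μ := by
      apply setIntegral_congr_fun (hmS i j)
      intro ω hω
      simp only [Set.mem_setOf_eq] at hω
      dsimp only
      rw [hω.1, hω.2]
    rw [step1, transfer i j (fun x => φ i x a * U j x b) ((hφm i a).mul (hUm j b))]
    congr 1
    have expand : (fun ω => φ i (X ω) a * U j (X ω) b)
        = fun ω => ∑ k : Fin K, P⁻¹ k i * (U k (X ω) a * U j (X ω) b) := by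
      funext ω
      simp only [hφ, Finset.sum_apply, Pi.smul_apply, smul_eq_mul, Finset.sum_mul, mul_assoc]
    rw [expand]
    rw [integral_finset_sum _ (fun k _ => ((hUU k j).restrict.const_mul _))]
    exact Finset.sum_congr rfl (fun k _ => integral_const_mul _ _)
  rw [hI1, hI2]
  -- matrix identity finish
  have hPinv : ∀ k j : Fin K, ∑ i, P⁻¹ k i * P i j = if k = j then 1 else 0 := by
    intro k j
    have h1 : (P⁻¹ * P) k j = if k = j then 1 else 0 := by
      rw [Matrix.nonsing_inv_mul P hP, Matrix.one_apply]
    rw [← h1, Matrix.mul_apply]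
  have hswap : ∑ i, ∑ j, P i j * ∑ k, P⁻¹ k i * A j k
      = ∑ j, ∑ k, (∑ i, P⁻¹ k i * P i j) * A j k := by
    simp only [Finset.mul_sum, Finset.sum_mul]
    rw [Finset.sum_comm]
    apply Finset.sum_congr rfl
    intro j _
    rw [Finset.sum_comm]
    apply Finset.sum_congr rfl; intro k _
    apply Finset.sum_congr rfl; intro i _
    ring
  rw [hswap]
  simp [hPinv, ite_mul, Finset.sum_ite_eq']
end

section
/- The efficiency loss due to privacy preservation is nonnegative: if every coordinate of ω ↦ U k (X ω) (k ∈ Fin K) is square-integrable, then the d×d matrix with (a,b) entry 𝔼[φ(Y*, X)_a · φ(Y*, X)_b] − 𝔼[U(Y, X)_a · U(Y, X)_b] is positive semidefinite, where φ i x = Σ_k (P⁻¹) k i • U k x. -/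
open MeasureTheory Finset

lemma aux_integrable_mul {Ω : Type*} [MeasurableSpace Ω] {μ : Measure Ω} {f g : Ω → ℝ}
    (hf : MemLp f 2 μ) (hg : MemLp g 2 μ) : Integrable (fun ω => f ω * g ω) μ := by
  have h := hg.smul (φ := f) (p := 2) (r := 1) hf
  rw [memLp_one_iff_integrable] at h
  exact h

lemma aux_memℒp_comp {Ω : Type*} [MeasurableSpace Ω] (μ : Measure Ω) {K : ℕ}
    (W : Ω → Fin K) (hW : Measurable W) (V : Fin K → Ω → ℝ) (hV : ∀ k, MemLp (V k) 2 μ) :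
    MemLp (fun ω => V (W ω) ω) 2 μ := by
  have he : (fun ω => V (W ω) ω) = fun ω => ∑ k : Fin K, Set.indicator (W ⁻¹' {k}) (V k) ω := by
    funext ω
    rw [Finset.sum_eq_single (W ω)]
    · rw [Set.indicator_of_mem (by simp)]
    · intro b _ hb
      exact Set.indicator_of_notMem (by simp [Ne.symm hb]) _
    · simp
  rw [he]
  have h2 := memLp_finset_sum' (μ := μ) (p := 2) Finset.univ
    (f := fun k => (W ⁻¹' {k}).indicator (V k))
    (fun k _ => (hV k).indicator (hW (measurableSet_singleton k)))
  convert h2 using 1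
  ext ω
  simp

lemma aux_partition_integral {Ω ι : Type*} [MeasurableSpace Ω] [Fintype ι] [MeasurableSpace ι]
    [MeasurableSingletonClass ι] {μ : Measure Ω} (Z : Ω → ι) (hZ : Measurable Z)
    (f : Ω → ℝ) (hf : Integrable f μ) :
    ∫ ω, f ω ∂μ = ∑ j : ι, ∫ ω in Z ⁻¹' {j}, f ω ∂μ := by
  have hpt : ∀ ω, f ω = ∑ j : ι, Set.indicator (Z ⁻¹' {j}) f ω := by
    intro ω
    rw [Finset.sum_eq_single (Z ω)]
    · rw [Set.indicator_of_mem (by simp)]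
    · intro b _ hb
      exact Set.indicator_of_notMem (by simp [Ne.symm hb]) _
    · simp
  calc ∫ ω, f ω ∂μ = ∫ ω, ∑ j : ι, Set.indicator (Z ⁻¹' {j}) f ω ∂μ :=
        integral_congr_ae (Filter.Eventually.of_forall hpt)
    _ = ∑ j : ι, ∫ ω, Set.indicator (Z ⁻¹' {j}) f ω ∂μ :=
        integral_finset_sum _ fun j _ => hf.indicator (hZ (measurableSet_singleton j))
    _ = ∑ j : ι, ∫ ω in Z ⁻¹' {j}, f ω ∂μ :=
        Finset.sum_congr rfl fun j _ => integral_indicator (hZ (measurableSet_singleton j))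

lemma aux_transfer {Ω 𝒳 : Type*} [MeasurableSpace Ω] [MeasurableSpace 𝒳]
    (μ : Measure Ω) [IsFiniteMeasure μ] (X : Ω → 𝒳) (hX : Measurable X)
    (S T : Set Ω) (hS : MeasurableSet S) (hT : MeasurableSet T) (c : ℝ)
    (h : ∀ A : Set 𝒳, MeasurableSet A →
      (μ (S ∩ X ⁻¹' A)).toReal = c * (μ (T ∩ X ⁻¹' A)).toReal)
    (g : 𝒳 → ℝ) (hg : Measurable g) :
    ∫ ω in S, g (X ω) ∂μ = c * ∫ ω in T, g (X ω) ∂μ := by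
  by_cases hT0 : μ T = 0
  · have hS0 : μ S = 0 := by
      have := h Set.univ MeasurableSet.univ
      simp only [Set.preimage_univ, Set.inter_univ] at this
      have : (μ S).toReal = 0 := by rw [this, hT0]; simp
      exact (ENNReal.toReal_eq_zero_iff _).mp this |>.resolve_right (measure_ne_top μ S)
    rw [Measure.restrict_eq_zero.mpr hS0, Measure.restrict_eq_zero.mpr hT0]
    simp
  · have hc : 0 ≤ c := by
      have huniv := h Set.univ MeasurableSet.univ
      simp only [Set.preimage_univ, Set.inter_univ] at huniv
      have hTpos : 0 < (μ T).toReal :=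
        ENNReal.toReal_pos hT0 (measure_ne_top μ T)
      nlinarith [ENNReal.toReal_nonneg (a := μ S)]
    have hmap : Measure.map X (μ.restrict S) = ENNReal.ofReal c • Measure.map X (μ.restrict T) := by
      ext A hA
      rw [Measure.smul_apply, Measure.map_apply hX hA, Measure.map_apply hX hA,
        Measure.restrict_apply' hS, Measure.restrict_apply' hT, Set.inter_comm, Set.inter_comm (X ⁻¹' A)]
      have hfin1 : μ (S ∩ X ⁻¹' A) ≠ ⊤ := measure_ne_top _ _
      have hfin2 : ENNReal.ofReal c • μ (T ∩ X ⁻¹' A) ≠ ⊤ :=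
        ENNReal.mul_ne_top ENNReal.ofReal_ne_top (measure_ne_top _ _)
      rw [← ENNReal.toReal_eq_toReal_iff' hfin1 hfin2]
      rw [h A hA]
      simp [ENNReal.toReal_mul, ENNReal.toReal_ofReal hc]
    have h1 : ∫ ω in S, g (X ω) ∂μ = ∫ x, g x ∂(Measure.map X (μ.restrict S)) :=
      (integral_map hX.aemeasurable hg.aestronglyMeasurable).symm
    have h2 : ∫ ω in T, g (X ω) ∂μ = ∫ x, g x ∂(Measure.map X (μ.restrict T)) :=
      (integral_map hX.aemeasurable hg.aestronglyMeasurable).symm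
    rw [h1, h2, hmap, integral_smul_measure, ENNReal.toReal_ofReal hc, smul_eq_mul]

lemma aux_memℒp_sum {Ω ι : Type*} [MeasurableSpace Ω] {μ : Measure Ω} (s : Finset ι)
    (f : ι → Ω → ℝ) (h : ∀ i ∈ s, MemLp (f i) 2 μ) :
    MemLp (fun ω => ∑ i ∈ s, f i ω) 2 μ := by
  have h2 := memLp_finset_sum' s h
  convert h2 using 1
  ext ω
  simp

/-- The efficiency loss due to privacy preservation is nonnegative: the `d × d` matrix with
`(a,b)` entry `𝔼[φ(Y*,X)_a * φ(Y*,X)_b] − 𝔼[U(Y,X)_a * U(Y,X)_b]` is positive semidefinite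
(i.e. `vᵀ M v ≥ 0` for all `v : Fin d → ℝ`), where `φ i x = ∑ k, (P⁻¹) k i • U k x`. -/
theorem pram_efficiency_loss_psd {Ω 𝒳 : Type*} [MeasurableSpace Ω] [MeasurableSpace 𝒳]
    (μ : Measure Ω) [IsProbabilityMeasure μ] {K d : ℕ}
    (Y Ystar : Ω → Fin K) (X : Ω → 𝒳)
    (hY : Measurable Y) (hYstar : Measurable Ystar) (hX : Measurable X)
    (P : Matrix (Fin K) (Fin K) ℝ) (hP : IsUnit P.det)
    (hpram : ∀ (i j : Fin K) (A : Set 𝒳), MeasurableSet A →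
      (μ {ω | Ystar ω = i ∧ Y ω = j ∧ X ω ∈ A}).toReal
        = P i j * (μ {ω | Y ω = j ∧ X ω ∈ A}).toReal)
    (U : Fin K → 𝒳 → (Fin d → ℝ)) (hU : ∀ k, Measurable (U k))
    (hUsq : ∀ (k : Fin K) (a : Fin d), MemLp (fun ω => U k (X ω) a) 2 μ)
    (φ : Fin K → 𝒳 → (Fin d → ℝ))
    (hφ : ∀ i x, φ i x = ∑ k : Fin K, P⁻¹ k i • U k x) :
    ∀ v : Fin d → ℝ,
      0 ≤ ∑ a : Fin d, ∑ b : Fin d,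
        v a * (∫ ω, φ (Ystar ω) (X ω) a * φ (Ystar ω) (X ω) b ∂μ
                - ∫ ω, U (Y ω) (X ω) a * U (Y ω) (X ω) b ∂μ) * v b := by
  intro v
  -- scalarized estimating functions
  set u : Fin K → 𝒳 → ℝ := fun j x => ∑ a : Fin d, v a * U j x a with hu_def
  set ψ : Fin K → 𝒳 → ℝ := fun i x => ∑ a : Fin d, v a * φ i x a with hψ_def
  set F : Ω → ℝ := fun ω => u (Y ω) (X ω) with hF_def
  set G : Ω → ℝ := fun ω => ψ (Ystar ω) (X ω) with hG_def
  -- basic identities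
  have hψ_eq : ∀ i x, ψ i x = ∑ k : Fin K, P⁻¹ k i * u k x := by
    intro i x
    simp only [hψ_def, hu_def, hφ, Finset.sum_apply, Pi.smul_apply, smul_eq_mul,
      Finset.mul_sum]
    rw [Finset.sum_comm]
    exact Finset.sum_congr rfl fun k _ => Finset.sum_congr rfl fun a _ => by ring
  -- measurability
  have hUm : ∀ k (a : Fin d), Measurable (fun x => U k x a) :=
    fun k a => (measurable_pi_apply a).comp (hU k)
  have hum : ∀ j, Measurable (u j) :=
    fun j => Finset.measurable_sum _ fun a _ => (hUm j a).const_mul (v a)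
  have hψm : ∀ i, Measurable (ψ i) := by
    intro i
    have : ψ i = fun x => ∑ k : Fin K, P⁻¹ k i * u k x := funext fun x => hψ_eq i x
    rw [this]
    exact Finset.measurable_sum _ fun k _ => (hum k).const_mul _
  -- Memℒp facts
  have huℒ : ∀ j, MemLp (fun ω => u j (X ω)) 2 μ := by
    intro j
    exact aux_memℒp_sum _ (fun a ω => v a * U j (X ω) a)
      (fun a _ => (hUsq j a).const_mul (v a))
  have hψℒ : ∀ i, MemLp (fun ω => ψ i (X ω)) 2 μ := by
    intro i
    have he : (fun ω => ψ i (X ω)) = fun ω => ∑ k : Fin K, P⁻¹ k i * u k (X ω) :=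
      funext fun ω => hψ_eq i (X ω)
    rw [he]
    exact aux_memℒp_sum _ _ (fun k _ => (huℒ k).const_mul _)
  have hFℒ : MemLp F 2 μ := aux_memℒp_comp μ Y hY (fun j ω => u j (X ω)) huℒ
  have hGℒ : MemLp G 2 μ := aux_memℒp_comp μ Ystar hYstar (fun i ω => ψ i (X ω)) hψℒ
  have hφcℒ : ∀ a : Fin d, MemLp (fun ω => φ (Ystar ω) (X ω) a) 2 μ := by
    intro a
    refine aux_memℒp_comp μ Ystar hYstar (fun i ω => φ i (X ω) a) (fun i => ?_)
    show MemLp (fun ω => φ i (X ω) a) 2 μ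
    have he : (fun ω => φ i (X ω) a) = fun ω => ∑ k : Fin K, P⁻¹ k i * U k (X ω) a := by
      funext ω
      simp [hφ]
    rw [he]
    exact aux_memℒp_sum _ _ (fun k _ => (hUsq k a).const_mul _)
  have hUcℒ : ∀ a : Fin d, MemLp (fun ω => U (Y ω) (X ω) a) 2 μ :=
    fun a => aux_memℒp_comp μ Y hY (fun k ω => U k (X ω) a) (fun k => hUsq k a)
  -- integrability of products
  have IGG : Integrable (fun ω => G ω * G ω) μ := aux_integrable_mul hGℒ hGℒ
  have IFF : Integrable (fun ω => F ω * F ω) μ := aux_integrable_mul hFℒ hFℒ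
  have IFG : Integrable (fun ω => F ω * G ω) μ := aux_integrable_mul hFℒ hGℒ
  -- Step 1: expansion of quadratic forms
  have hGexp : ∑ a : Fin d, ∑ b : Fin d,
      v a * (∫ ω, φ (Ystar ω) (X ω) a * φ (Ystar ω) (X ω) b ∂μ) * v b
      = ∫ ω, G ω * G ω ∂μ := by
    have h1 : ∫ ω, G ω * G ω ∂μ
        = ∫ ω, ∑ a : Fin d, ∑ b : Fin d,
            (v a * φ (Ystar ω) (X ω) a) * (v b * φ (Ystar ω) (X ω) b) ∂μ := by
      refine integral_congr_ae (Filter.Eventually.of_forall fun ω => ?_)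
      simp only [hG_def, hψ_def]
      rw [Finset.sum_mul_sum]
    rw [h1]
    rw [integral_finset_sum _ (fun a _ => ?_)]
    · refine Finset.sum_congr rfl fun a _ => ?_
      rw [integral_finset_sum _ (fun b _ => ?_)]
      · refine Finset.sum_congr rfl fun b _ => ?_
        have he : (fun ω => (v a * φ (Ystar ω) (X ω) a) * (v b * φ (Ystar ω) (X ω) b))
            = fun ω => (v a * v b) * (φ (Ystar ω) (X ω) a * φ (Ystar ω) (X ω) b) := by
          funext ω; ring
        rw [he, integral_const_mul]
        ring
      · have he : (fun ω => (v a * φ (Ystar ω) (X ω) a) * (v b * φ (Ystar ω) (X ω) b))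
            = fun ω => (v a * v b) * (φ (Ystar ω) (X ω) a * φ (Ystar ω) (X ω) b) := by
          funext ω; ring
        rw [he]
        exact (aux_integrable_mul (hφcℒ a) (hφcℒ b)).const_mul _
    · refine integrable_finset_sum _ (fun b _ => ?_)
      have he : (fun ω => (v a * φ (Ystar ω) (X ω) a) * (v b * φ (Ystar ω) (X ω) b))
          = fun ω => (v a * v b) * (φ (Ystar ω) (X ω) a * φ (Ystar ω) (X ω) b) := by
        funext ω; ring
      rw [he]
      exact (aux_integrable_mul (hφcℒ a) (hφcℒ b)).const_mul _
  have hFexp : ∑ a : Fin d, ∑ b : Fin d,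
      v a * (∫ ω, U (Y ω) (X ω) a * U (Y ω) (X ω) b ∂μ) * v b
      = ∫ ω, F ω * F ω ∂μ := by
    have h1 : ∫ ω, F ω * F ω ∂μ
        = ∫ ω, ∑ a : Fin d, ∑ b : Fin d,
            (v a * U (Y ω) (X ω) a) * (v b * U (Y ω) (X ω) b) ∂μ := by
      refine integral_congr_ae (Filter.Eventually.of_forall fun ω => ?_)
      simp only [hF_def, hu_def]
      rw [Finset.sum_mul_sum]
    rw [h1]
    rw [integral_finset_sum _ (fun a _ => ?_)]
    · refine Finset.sum_congr rfl fun a _ => ?_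
      rw [integral_finset_sum _ (fun b _ => ?_)]
      · refine Finset.sum_congr rfl fun b _ => ?_
        have he : (fun ω => (v a * U (Y ω) (X ω) a) * (v b * U (Y ω) (X ω) b))
            = fun ω => (v a * v b) * (U (Y ω) (X ω) a * U (Y ω) (X ω) b) := by
          funext ω; ring
        rw [he, integral_const_mul]
        ring
      · have he : (fun ω => (v a * U (Y ω) (X ω) a) * (v b * U (Y ω) (X ω) b))
            = fun ω => (v a * v b) * (U (Y ω) (X ω) a * U (Y ω) (X ω) b) := by
          funext ω; ring
        rw [he]
        exact (aux_integrable_mul (hUcℒ a) (hUcℒ b)).const_mul _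
    · refine integrable_finset_sum _ (fun b _ => ?_)
      have he : (fun ω => (v a * U (Y ω) (X ω) a) * (v b * U (Y ω) (X ω) b))
          = fun ω => (v a * v b) * (U (Y ω) (X ω) a * U (Y ω) (X ω) b) := by
        funext ω; ring
      rw [he]
      exact (aux_integrable_mul (hUcℒ a) (hUcℒ b)).const_mul _
  -- Step 2: ∫ F G = ∫ F F
  have hPψ : ∀ (j : Fin K) (x : 𝒳), ∑ i : Fin K, P i j * ψ i x = u j x := by
    intro j x
    have hinv : P⁻¹ * P = 1 := Matrix.nonsing_inv_mul P hP
    calc ∑ i : Fin K, P i j * ψ i x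
        = ∑ i : Fin K, ∑ k : Fin K, P⁻¹ k i * P i j * u k x := by
          refine Finset.sum_congr rfl fun i _ => ?_
          rw [hψ_eq, Finset.mul_sum]
          exact Finset.sum_congr rfl fun k _ => by ring
      _ = ∑ k : Fin K, (∑ i : Fin K, P⁻¹ k i * P i j) * u k x := by
          rw [Finset.sum_comm]
          exact Finset.sum_congr rfl fun k _ => by rw [Finset.sum_mul]
      _ = ∑ k : Fin K, (P⁻¹ * P) k j * u k x := by
          refine Finset.sum_congr rfl fun k _ => ?_
          rw [Matrix.mul_apply]
      _ = u j x := by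
          rw [hinv]
          simp [Matrix.one_apply]
  have hFG : ∫ ω, F ω * G ω ∂μ = ∫ ω, F ω * F ω ∂μ := by
    set Z : Ω → Fin K × Fin K := fun ω => (Ystar ω, Y ω) with hZ_def
    have hZ : Measurable Z := hYstar.prodMk hY
    have hpart := aux_partition_integral Z hZ _ IFG
    have hpartF := aux_partition_integral Y hY _ IFF
    rw [hpart, hpartF]
    have hstep : ∀ (i j : Fin K),
        ∫ ω in Z ⁻¹' {(i, j)}, F ω * G ω ∂μ
          = P i j * ∫ ω in Y ⁻¹' {j}, u j (X ω) * ψ i (X ω) ∂μ := by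
      intro i j
      have hSmeas : MeasurableSet (Z ⁻¹' {(i, j)}) := hZ (measurableSet_singleton _)
      have hTmeas : MeasurableSet (Y ⁻¹' {j}) := hY (measurableSet_singleton _)
      have heq : ∫ ω in Z ⁻¹' {(i, j)}, F ω * G ω ∂μ
          = ∫ ω in Z ⁻¹' {(i, j)}, u j (X ω) * ψ i (X ω) ∂μ := by
        refine setIntegral_congr_fun hSmeas fun ω hω => ?_
        have hω' : Ystar ω = i ∧ Y ω = j := by
          simpa [hZ_def, Prod.ext_iff] using hω
        simp only [hF_def, hG_def, hω'.1, hω'.2]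
      rw [heq]
      refine aux_transfer μ X hX _ _ hSmeas hTmeas (P i j) (fun A hA => ?_)
        (fun x => u j x * ψ i x) ((hum j).mul (hψm i))
      have e1 : Z ⁻¹' {(i, j)} ∩ X ⁻¹' A = {ω | Ystar ω = i ∧ Y ω = j ∧ X ω ∈ A} := by
        ext ω
        simp [hZ_def, Prod.ext_iff, and_assoc]
      have e2 : Y ⁻¹' {j} ∩ X ⁻¹' A = {ω | Y ω = j ∧ X ω ∈ A} := by
        ext ω
        simp
      rw [e1, e2]
      exact hpram i j A hA
    calc ∑ p : Fin K × Fin K, ∫ ω in Z ⁻¹' {p}, F ω * G ω ∂μ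
        = ∑ i : Fin K, ∑ j : Fin K, P i j * ∫ ω in Y ⁻¹' {j}, u j (X ω) * ψ i (X ω) ∂μ := by
          rw [Fintype.sum_prod_type]
          exact Finset.sum_congr rfl fun i _ => Finset.sum_congr rfl fun j _ => hstep i j
      _ = ∑ j : Fin K, ∑ i : Fin K, P i j * ∫ ω in Y ⁻¹' {j}, u j (X ω) * ψ i (X ω) ∂μ :=
          by rw [Finset.sum_comm]
      _ = ∑ j : Fin K, ∫ ω in Y ⁻¹' {j}, u j (X ω) * u j (X ω) ∂μ := by
          refine Finset.sum_congr rfl fun j _ => ?_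
          have hint : ∀ i : Fin K,
              Integrable (fun ω => u j (X ω) * ψ i (X ω)) (μ.restrict (Y ⁻¹' {j})) :=
            fun i => (aux_integrable_mul (huℒ j) (hψℒ i)).restrict
          calc ∑ i : Fin K, P i j * ∫ ω in Y ⁻¹' {j}, u j (X ω) * ψ i (X ω) ∂μ
              = ∑ i : Fin K, ∫ ω in Y ⁻¹' {j}, P i j * (u j (X ω) * ψ i (X ω)) ∂μ := by
                refine Finset.sum_congr rfl fun i _ => ?_
                rw [integral_const_mul]
            _ = ∫ ω in Y ⁻¹' {j}, ∑ i : Fin K, P i j * (u j (X ω) * ψ i (X ω)) ∂μ :=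
                (integral_finset_sum _ fun i _ => (hint i).const_mul _).symm
            _ = ∫ ω in Y ⁻¹' {j}, u j (X ω) * u j (X ω) ∂μ := by
                refine integral_congr_ae (Filter.Eventually.of_forall fun ω => ?_)
                calc ∑ i : Fin K, P i j * (u j (X ω) * ψ i (X ω))
                    = u j (X ω) * ∑ i : Fin K, P i j * ψ i (X ω) := by
                      rw [Finset.mul_sum]
                      exact Finset.sum_congr rfl fun i _ => by ring
                  _ = u j (X ω) * u j (X ω) := by rw [hPψ j (X ω)]
      _ = ∑ j : Fin K, ∫ ω in Y ⁻¹' {j}, F ω * F ω ∂μ := by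
          refine Finset.sum_congr rfl fun j _ => ?_
          refine (setIntegral_congr_fun (hY (measurableSet_singleton j)) fun ω hω => ?_)
          have : Y ω = j := hω
          simp only [hF_def, this]
  -- Step 3: conclude
  have hsq : ∫ ω, (G ω - F ω) ^ 2 ∂μ
      = ∫ ω, G ω * G ω ∂μ - ∫ ω, F ω * F ω ∂μ := by
    have h1 : ∫ ω, (G ω - F ω) ^ 2 ∂μ
        = ∫ ω, (G ω * G ω + F ω * F ω) - 2 * (F ω * G ω) ∂μ := by
      refine integral_congr_ae (Filter.Eventually.of_forall fun ω => ?_)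
      ring
    have h2 : Integrable (fun ω => G ω * G ω + F ω * F ω) μ := IGG.add IFF
    rw [h1, integral_sub h2 (IFG.const_mul 2), integral_add IGG IFF,
      integral_const_mul, hFG]
    ring
  have hnn : 0 ≤ ∫ ω, (G ω - F ω) ^ 2 ∂μ :=
    integral_nonneg fun ω => sq_nonneg _
  have hsplit : ∑ a : Fin d, ∑ b : Fin d,
      v a * (∫ ω, φ (Ystar ω) (X ω) a * φ (Ystar ω) (X ω) b ∂μ
            - ∫ ω, U (Y ω) (X ω) a * U (Y ω) (X ω) b ∂μ) * v b
      = (∑ a : Fin d, ∑ b : Fin d,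
          v a * (∫ ω, φ (Ystar ω) (X ω) a * φ (Ystar ω) (X ω) b ∂μ) * v b)
        - ∑ a : Fin d, ∑ b : Fin d,
          v a * (∫ ω, U (Y ω) (X ω) a * U (Y ω) (X ω) b ∂μ) * v b := by
    rw [← Finset.sum_sub_distrib]
    refine Finset.sum_congr rfl fun a _ => ?_
    rw [← Finset.sum_sub_distrib]
    exact Finset.sum_congr rfl fun b _ => by ring
  rw [hsplit, hGexp, hFexp, ← hsq]
  exact hnn
end

section
/- Conjugated efficiency-loss decomposition (Remark 1): if every coordinate of ω ↦ U k (X ω) (k ∈ Fin K) is square-integrable and Ω₀ is an invertible d×d real matrix, then Ω₀⁻¹ · 𝔼[φ φᵀ] · (Ω₀⁻¹)ᵀ = Ω₀⁻¹ · 𝔼[U Uᵀ] · (Ω₀⁻¹)ᵀ + Ω₀⁻¹ · 𝔼[(φ − U)(φ − U)ᵀ] · (Ω₀⁻¹)ᵀ, where the expectations are the d×d matrices with entries 𝔼[φ(Y*,X)_a φ(Y*,X)_b], 𝔼[U(Y,X)_a U(Y,X)_b], and 𝔼[(φ(Y*,X)_a − U(Y,X)_a)(φ(Y*,X)_b − U(Y,X)_b)]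 respectively, and the last summand Ω₀⁻¹ · 𝔼[(φ − U)(φ − U)ᵀ] · (Ω₀⁻¹)ᵀ is positive semidefinite. -/
open MeasureTheory Finset Matrix

namespace PramAux

variable {Ω : Type*} [MeasurableSpace Ω] {μ : MeasureTheory.Measure Ω}

lemma int_mul {f g : Ω → ℝ} (hf : MemLp f 2 μ) (hg : MemLp g 2 μ) :
    Integrable (fun ω => f ω * g ω) μ := by
  have h : MemLp (g • f) 1 μ := hf.smul hg
  have := memLp_one_iff_integrable.mp h
  simpa [Pi.smul_apply, smul_eq_mul, mul_comm, Pi.mul_def] using this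

lemma integral_partition {ι : Type*} [Fintype ι] [MeasurableSpace ι]
    [MeasurableSingletonClass ι]
    {Z : Ω → ι} (hZ : Measurable Z) {F : Ω → ℝ} (hF : Integrable F μ) :
    ∫ ω, F ω ∂μ = ∑ i : ι, ∫ ω in {ω | Z ω = i}, F ω ∂μ := by
  have hmeas : ∀ i, MeasurableSet {ω | Z ω = i} :=
    fun i => hZ (measurableSet_singleton i)
  have hpt : ∀ ω, F ω = ∑ i : ι, Set.indicator {ω | Z ω = i} F ω := by
    intro ω
    classical
    rw [eq_comm]
    simp only [Set.indicator_apply, Set.mem_setOf_eq]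
    rw [Finset.sum_ite_eq]
    simp
  have h1 : ∫ ω, F ω ∂μ = ∑ i : ι, ∫ ω, Set.indicator {ω | Z ω = i} F ω ∂μ := by
    rw [← integral_finset_sum _ (fun i _ => hF.indicator (hmeas i))]
    exact integral_congr_ae (.of_forall hpt)
  rw [h1]
  exact Finset.sum_congr rfl fun i _ => integral_indicator (hmeas i)

lemma scale {𝒳 : Type*} [MeasurableSpace 𝒳] [IsFiniteMeasure μ]
    {X : Ω → 𝒳} (hX : Measurable X)
    {S T : Set Ω} {c : ℝ}
    (h : ∀ A : Set 𝒳, MeasurableSet A →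
      (μ (S ∩ X ⁻¹' A)).toReal = c * (μ (T ∩ X ⁻¹' A)).toReal)
    {f : 𝒳 → ℝ} (hf : Measurable f) :
    ∫ ω in S, f (X ω) ∂μ = c * ∫ ω in T, f (X ω) ∂μ := by
  set ν1 := (μ.restrict S).map X with hν1
  set ν2 := (μ.restrict T).map X with hν2
  have hmap : ∀ (s : Set Ω) (A : Set 𝒳), MeasurableSet A →
      ((μ.restrict s).map X) A = μ (s ∩ X ⁻¹' A) := by
    intro s A hA
    rw [Measure.map_apply hX hA, Measure.restrict_apply (hX hA), Set.inter_comm]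
  have key : ∀ A, MeasurableSet A → (ν1 A).toReal = c * (ν2 A).toReal := by
    intro A hA
    rw [hν1, hν2, hmap S A hA, hmap T A hA]
    exact h A hA
  have hi1 : ∫ ω in S, f (X ω) ∂μ = ∫ x, f x ∂ν1 :=
    (integral_map hX.aemeasurable hf.aestronglyMeasurable).symm
  have hi2 : ∫ ω in T, f (X ω) ∂μ = ∫ x, f x ∂ν2 :=
    (integral_map hX.aemeasurable hf.aestronglyMeasurable).symm
  by_cases hT0 : ν2 Set.univ = 0
  · have h2 : ν2 = 0 := Measure.measure_univ_eq_zero.mp hT0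
    have h1 : ν1 = 0 := by
      apply Measure.measure_univ_eq_zero.mp
      have hk := key Set.univ MeasurableSet.univ
      rw [hT0] at hk
      simp only [ENNReal.toReal_zero, mul_zero] at hk
      exact (ENNReal.toReal_eq_zero_iff _).mp hk |>.resolve_right (measure_ne_top _ _)
    rw [hi1, hi2, h1, h2]
    simp
  · have hpos : 0 < (ν2 Set.univ).toReal :=
      ENNReal.toReal_pos hT0 (measure_ne_top _ _)
    have hc : 0 ≤ c := by
      have hk := key Set.univ MeasurableSet.univ
      nlinarith [ENNReal.toReal_nonneg (a := ν1 Set.univ)]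
    have hν : ν1 = ENNReal.ofReal c • ν2 := by
      ext A hA
      rw [Measure.smul_apply, smul_eq_mul,
        ← ENNReal.ofReal_toReal (measure_ne_top ν1 A), key A hA,
        ENNReal.ofReal_mul hc, ENNReal.ofReal_toReal (measure_ne_top ν2 A)]
    rw [hi1, hi2, hν, integral_smul_measure, ENNReal.toReal_ofReal hc, smul_eq_mul]

end PramAux

/-- Conjugated efficiency-loss decomposition (Remark 1): for an invertible `d × d` matrix
`Ω₀`, `Ω₀⁻¹ 𝔼[φφᵀ] (Ω₀⁻¹)ᵀ = Ω₀⁻¹ 𝔼[UUᵀ] (Ω₀⁻¹)ᵀ + Ω₀⁻¹ 𝔼[(φ−U)(φ−U)ᵀ] (Ω₀⁻¹)ᵀ`, and the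
last summand is positive semidefinite, where `φ i x = ∑ k, (P⁻¹) k i • U k x`. -/
theorem pram_conjugated_efficiency_loss {Ω 𝒳 : Type*} [MeasurableSpace Ω] [MeasurableSpace 𝒳]
    (μ : Measure Ω) [IsProbabilityMeasure μ] {K d : ℕ}
    (Y Ystar : Ω → Fin K) (X : Ω → 𝒳)
    (hY : Measurable Y) (hYstar : Measurable Ystar) (hX : Measurable X)
    (P : Matrix (Fin K) (Fin K) ℝ) (hP : IsUnit P.det)
    (hpram : ∀ (i j : Fin K) (A : Set 𝒳), MeasurableSet A →
      (μ {ω | Ystar ω = i ∧ Y ω = j ∧ X ω ∈ A}).toReal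
        = P i j * (μ {ω | Y ω = j ∧ X ω ∈ A}).toReal)
    (U : Fin K → 𝒳 → (Fin d → ℝ)) (hU : ∀ k, Measurable (U k))
    (hUsq : ∀ (k : Fin K) (a : Fin d), MemLp (fun ω => U k (X ω) a) 2 μ)
    (φ : Fin K → 𝒳 → (Fin d → ℝ))
    (hφ : ∀ i x, φ i x = ∑ k : Fin K, P⁻¹ k i • U k x)
    (Ω₀ : Matrix (Fin d) (Fin d) ℝ) (hΩ₀ : IsUnit Ω₀.det)
    (Ephiphi EUU Ediff : Matrix (Fin d) (Fin d) ℝ)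
    (hEphiphi : ∀ a b, Ephiphi a b = ∫ ω, φ (Ystar ω) (X ω) a * φ (Ystar ω) (X ω) b ∂μ)
    (hEUU : ∀ a b, EUU a b = ∫ ω, U (Y ω) (X ω) a * U (Y ω) (X ω) b ∂μ)
    (hEdiff : ∀ a b, Ediff a b
      = ∫ ω, (φ (Ystar ω) (X ω) a - U (Y ω) (X ω) a)
          * (φ (Ystar ω) (X ω) b - U (Y ω) (X ω) b) ∂μ) :
    Ω₀⁻¹ * Ephiphi * (Ω₀⁻¹)ᵀ = Ω₀⁻¹ * EUU * (Ω₀⁻¹)ᵀ + Ω₀⁻¹ * Ediff * (Ω₀⁻¹)ᵀ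
    ∧ ∀ v : Fin d → ℝ,
        0 ≤ ∑ a : Fin d, ∑ b : Fin d, v a * (Ω₀⁻¹ * Ediff * (Ω₀⁻¹)ᵀ) a b * v b := by
  classical
  -- measurability of components
  have hφm : ∀ (i : Fin K) (a : Fin d), Measurable fun x => φ i x a := by
    intro i a
    have h : (fun x => φ i x a) = fun x => ∑ k : Fin K, P⁻¹ k i * U k x a := by
      funext x; rw [hφ]; simp [Finset.sum_apply, Pi.smul_apply, smul_eq_mul]
    rw [h]
    exact Finset.measurable_sum _ fun k _ =>
      ((measurable_pi_apply a).comp (hU k)).const_mul _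
  -- square integrability of components
  have hφcomp : ∀ (i : Fin K) (a : Fin d), MemLp (fun ω => φ i (X ω) a) 2 μ := by
    intro i a
    have h : (fun ω => φ i (X ω) a) = fun ω => ∑ k : Fin K, P⁻¹ k i * U k (X ω) a := by
      funext ω; rw [hφ]; simp [Finset.sum_apply, Pi.smul_apply, smul_eq_mul]
    rw [h]
    exact memLp_finset_sum _ fun k _ => (hUsq k a).const_mul _
  have hlift : ∀ (Z : Ω → Fin K), Measurable Z → ∀ (g : Fin K → Ω → ℝ),
      (∀ i, MemLp (g i) 2 μ) → MemLp (fun ω => g (Z ω) ω) 2 μ := by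
    intro Z hZ g hg
    have h : (fun ω => g (Z ω) ω)
        = fun ω => ∑ i : Fin K, Set.indicator {ω | Z ω = i} (g i) ω := by
      funext ω
      rw [eq_comm]
      simp only [Set.indicator_apply, Set.mem_setOf_eq]
      rw [Finset.sum_ite_eq]
      simp
    rw [h]
    exact memLp_finset_sum _ fun i _ =>
      (hg i).indicator (hZ (measurableSet_singleton i))
  have hA : ∀ a, MemLp (fun ω => φ (Ystar ω) (X ω) a) 2 μ :=
    fun a => hlift Ystar hYstar (fun i ω => φ i (X ω) a) (fun i => hφcomp i a)
  have hB : ∀ a, MemLp (fun ω => U (Y ω) (X ω) a) 2 μ :=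
    fun a => hlift Y hY (fun j ω => U j (X ω) a) (fun j => hUsq j a)
  have hD : ∀ a, MemLp (fun ω => φ (Ystar ω) (X ω) a - U (Y ω) (X ω) a) 2 μ :=
    fun a => (hA a).sub (hB a)
  -- the scaling consequence of the PRAM assumption
  have hscale : ∀ (i j : Fin K) (f : 𝒳 → ℝ), Measurable f →
      ∫ ω in {ω | Ystar ω = i ∧ Y ω = j}, f (X ω) ∂μ
        = P i j * ∫ ω in {ω | Y ω = j}, f (X ω) ∂μ := by
    intro i j f hf
    refine PramAux.scale hX (fun A hA' => ?_) hf
    have h1 : {ω | Ystar ω = i ∧ Y ω = j} ∩ X ⁻¹' A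
        = {ω | Ystar ω = i ∧ Y ω = j ∧ X ω ∈ A} := by
      ext ω; simp [Set.mem_setOf_eq, and_assoc]
    have h2 : {ω | Y ω = j} ∩ X ⁻¹' A = {ω | Y ω = j ∧ X ω ∈ A} := by
      ext ω; simp [Set.mem_setOf_eq]
    rw [h1, h2]; exact hpram i j A hA'
  -- the key unbiasedness algebra
  have hinv : P⁻¹ * P = 1 := Matrix.nonsing_inv_mul P hP
  have hkey : ∀ (j : Fin K) (x : 𝒳) (a : Fin d),
      ∑ i : Fin K, P i j * φ i x a = U j x a := by
    intro j x a
    have hcalc : ∀ i : Fin K, P i j * φ i x a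
        = ∑ k : Fin K, P⁻¹ k i * P i j * U k x a := by
      intro i
      rw [hφ]
      simp only [Finset.sum_apply, Pi.smul_apply, smul_eq_mul, Finset.mul_sum]
      exact Finset.sum_congr rfl fun k _ => by ring
    simp only [hcalc]
    rw [Finset.sum_comm]
    have h2 : ∀ k : Fin K, ∑ i : Fin K, P⁻¹ k i * P i j * U k x a
        = (if k = j then (1:ℝ) else 0) * U k x a := by
      intro k
      rw [← Finset.sum_mul]
      congr 1
      have h3 := congrFun (congrFun hinv k) j
      rwa [Matrix.mul_apply, Matrix.one_apply] at h3
    simp only [h2, ite_mul, one_mul, zero_mul]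
    rw [Finset.sum_ite_eq']
    simp
  -- the cross term identity
  have hcross : ∀ a b : Fin d,
      ∫ ω, φ (Ystar ω) (X ω) a * U (Y ω) (X ω) b ∂μ
        = ∫ ω, U (Y ω) (X ω) a * U (Y ω) (X ω) b ∂μ := by
    intro a b
    have hintAB : Integrable (fun ω => φ (Ystar ω) (X ω) a * U (Y ω) (X ω) b) μ :=
      PramAux.int_mul (hA a) (hB b)
    have hintBB : Integrable (fun ω => U (Y ω) (X ω) a * U (Y ω) (X ω) b) μ :=
      PramAux.int_mul (hB a) (hB b)
    have hZ : Measurable fun ω => (Ystar ω, Y ω) := hYstar.prodMk hY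
    have hterm : ∀ i j : Fin K,
        ∫ ω in {ω | (Ystar ω, Y ω) = (i, j)},
            φ (Ystar ω) (X ω) a * U (Y ω) (X ω) b ∂μ
          = P i j * ∫ ω in {ω | Y ω = j}, φ i (X ω) a * U j (X ω) b ∂μ := by
      intro i j
      have hseteq : {ω | (Ystar ω, Y ω) = (i, j)}
          = {ω | Ystar ω = i ∧ Y ω = j} := by
        ext ω; simp [Prod.ext_iff]
      have hmeasS : MeasurableSet {ω | Ystar ω = i ∧ Y ω = j} := by
        have : {ω | Ystar ω = i ∧ Y ω = j}
            = (Ystar ⁻¹' {i}) ∩ (Y ⁻¹' {j}) := by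
          ext ω; simp [Set.mem_setOf_eq]
        rw [this]
        exact (hYstar (measurableSet_singleton i)).inter (hY (measurableSet_singleton j))
      rw [hseteq]
      have hcongr : ∫ ω in {ω | Ystar ω = i ∧ Y ω = j},
            φ (Ystar ω) (X ω) a * U (Y ω) (X ω) b ∂μ
          = ∫ ω in {ω | Ystar ω = i ∧ Y ω = j}, φ i (X ω) a * U j (X ω) b ∂μ :=
        setIntegral_congr_fun hmeasS (fun ω hω => by
          obtain ⟨h1, h2⟩ := hω
          simp only [h1, h2])
      rw [hcongr]
      exact hscale i j _ ((hφm i a).mul ((measurable_pi_apply b).comp (hU j)))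
    have hj : ∀ j : Fin K,
        ∑ i : Fin K, P i j * ∫ ω in {ω | Y ω = j}, φ i (X ω) a * U j (X ω) b ∂μ
          = ∫ ω in {ω | Y ω = j}, U j (X ω) a * U j (X ω) b ∂μ := by
      intro j
      have hint : ∀ i : Fin K, Integrable
          (fun ω => P i j * (φ i (X ω) a * U j (X ω) b)) (μ.restrict {ω | Y ω = j}) :=
        fun i => (((PramAux.int_mul (hφcomp i a) (hUsq j b)).restrict)).const_mul _
      calc ∑ i : Fin K, P i j * ∫ ω in {ω | Y ω = j}, φ i (X ω) a * U j (X ω) b ∂μ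
          = ∑ i : Fin K, ∫ ω in {ω | Y ω = j},
              P i j * (φ i (X ω) a * U j (X ω) b) ∂μ := by
            exact Finset.sum_congr rfl fun i _ => (integral_const_mul _ _).symm
        _ = ∫ ω in {ω | Y ω = j},
              ∑ i : Fin K, P i j * (φ i (X ω) a * U j (X ω) b) ∂μ :=
            (integral_finset_sum _ fun i _ => hint i).symm
        _ = ∫ ω in {ω | Y ω = j}, U j (X ω) a * U j (X ω) b ∂μ := by
            refine integral_congr_ae (.of_forall fun ω => ?_)
            dsimp only
            have h4 : ∑ i : Fin K, P i j * (φ i (X ω) a * U j (X ω) b)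
                = (∑ i : Fin K, P i j * φ i (X ω) a) * U j (X ω) b := by
              rw [Finset.sum_mul]
              exact Finset.sum_congr rfl fun i _ => by ring
            rw [h4, hkey j (X ω) a]
    calc ∫ ω, φ (Ystar ω) (X ω) a * U (Y ω) (X ω) b ∂μ
        = ∑ p : Fin K × Fin K, ∫ ω in {ω | (fun ω => (Ystar ω, Y ω)) ω = p},
            φ (Ystar ω) (X ω) a * U (Y ω) (X ω) b ∂μ :=
          PramAux.integral_partition hZ hintAB
      _ = ∑ i : Fin K, ∑ j : Fin K, ∫ ω in {ω | (Ystar ω, Y ω) = (i, j)},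
            φ (Ystar ω) (X ω) a * U (Y ω) (X ω) b ∂μ := by
          rw [Fintype.sum_prod_type]
      _ = ∑ j : Fin K, ∑ i : Fin K,
            P i j * ∫ ω in {ω | Y ω = j}, φ i (X ω) a * U j (X ω) b ∂μ := by
          rw [Finset.sum_comm]
          exact Finset.sum_congr rfl fun j _ =>
            Finset.sum_congr rfl fun i _ => hterm i j
      _ = ∑ j : Fin K, ∫ ω in {ω | Y ω = j}, U j (X ω) a * U j (X ω) b ∂μ :=
          Finset.sum_congr rfl fun j _ => hj j
      _ = ∑ j : Fin K, ∫ ω in {ω | Y ω = j}, U (Y ω) (X ω) a * U (Y ω) (X ω) b ∂μ := by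
          refine Finset.sum_congr rfl fun j _ => ?_
          refine setIntegral_congr_fun (hY (measurableSet_singleton j)) fun ω hω => ?_
          have : Y ω = j := hω
          simp only [this]
      _ = ∫ ω, U (Y ω) (X ω) a * U (Y ω) (X ω) b ∂μ :=
          (PramAux.integral_partition hY hintBB).symm
  -- integrability of all products
  have hintAA : ∀ a b : Fin d,
      Integrable (fun ω => φ (Ystar ω) (X ω) a * φ (Ystar ω) (X ω) b) μ :=
    fun a b => PramAux.int_mul (hA a) (hA b)
  have hintBB : ∀ a b : Fin d,
      Integrable (fun ω => U (Y ω) (X ω) a * U (Y ω) (X ω) b) μ :=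
    fun a b => PramAux.int_mul (hB a) (hB b)
  have hintAB : ∀ a b : Fin d,
      Integrable (fun ω => φ (Ystar ω) (X ω) a * U (Y ω) (X ω) b) μ :=
    fun a b => PramAux.int_mul (hA a) (hB b)
  have hintBA : ∀ a b : Fin d,
      Integrable (fun ω => U (Y ω) (X ω) a * φ (Ystar ω) (X ω) b) μ :=
    fun a b => PramAux.int_mul (hB a) (hA b)
  -- the matrix decomposition
  have hmat : Ephiphi = EUU + Ediff := by
    ext a b
    have hEd : Ediff a b = Ephiphi a b - EUU a b := by
      rw [hEdiff, hEphiphi, hEUU]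
      have hre : (fun ω => (φ (Ystar ω) (X ω) a - U (Y ω) (X ω) a)
              * (φ (Ystar ω) (X ω) b - U (Y ω) (X ω) b))
          = fun ω => (φ (Ystar ω) (X ω) a * φ (Ystar ω) (X ω) b
                + U (Y ω) (X ω) a * U (Y ω) (X ω) b)
              - (φ (Ystar ω) (X ω) a * U (Y ω) (X ω) b
                + U (Y ω) (X ω) a * φ (Ystar ω) (X ω) b) := by
        funext ω; ring
      have hi1 : Integrable (fun ω => φ (Ystar ω) (X ω) a * φ (Ystar ω) (X ω) b
          + U (Y ω) (X ω) a * U (Y ω) (X ω) b) μ := (hintAA a b).add (hintBB a b)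
      have hi2 : Integrable (fun ω => φ (Ystar ω) (X ω) a * U (Y ω) (X ω) b
          + U (Y ω) (X ω) a * φ (Ystar ω) (X ω) b) μ := (hintAB a b).add (hintBA a b)
      rw [hre, integral_sub hi1 hi2,
        integral_add (hintAA a b) (hintBB a b),
        integral_add (hintAB a b) (hintBA a b), hcross a b]
      have h5 : ∫ ω, U (Y ω) (X ω) a * φ (Ystar ω) (X ω) b ∂μ
          = ∫ ω, U (Y ω) (X ω) a * U (Y ω) (X ω) b ∂μ := by
        have h6 : ∫ ω, U (Y ω) (X ω) a * φ (Ystar ω) (X ω) b ∂μ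
            = ∫ ω, φ (Ystar ω) (X ω) b * U (Y ω) (X ω) a ∂μ :=
          integral_congr_ae (.of_forall fun ω => by ring)
        rw [h6, hcross b a]
        exact integral_congr_ae (.of_forall fun ω => by ring)
      rw [h5]
      ring
    rw [Matrix.add_apply, hEd]
    ring
  constructor
  · rw [hmat, Matrix.mul_add, Matrix.add_mul]
  · intro v
    set N := Ω₀⁻¹ with hN
    set w : Fin d → ℝ := v ᵥ* N with hw
    have h1 : ∑ a : Fin d, ∑ b : Fin d, v a * (N * Ediff * Nᵀ) a b * v b
        = v ⬝ᵥ ((N * Ediff * Nᵀ) *ᵥ v) := by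
      simp only [dotProduct, Matrix.mulVec, dotProduct, Finset.mul_sum]
      exact Finset.sum_congr rfl fun a _ =>
        Finset.sum_congr rfl fun b _ => by ring
    have h2 : v ⬝ᵥ ((N * Ediff * Nᵀ) *ᵥ v) = w ⬝ᵥ (Ediff *ᵥ w) := by
      rw [← Matrix.mulVec_mulVec, ← Matrix.mulVec_mulVec,
        Matrix.dotProduct_mulVec, Matrix.mulVec_transpose, hw]
    have h3 : w ⬝ᵥ (Ediff *ᵥ w) = ∑ c : Fin d, ∑ e : Fin d, w c * Ediff c e * w e := by
      simp only [dotProduct, Matrix.mulVec, dotProduct, Finset.mul_sum]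
      exact Finset.sum_congr rfl fun c _ =>
        Finset.sum_congr rfl fun e _ => by ring
    rw [h1, h2, h3]
    have h4 : ∑ c : Fin d, ∑ e : Fin d, w c * Ediff c e * w e
        = ∫ ω, (∑ c : Fin d,
            w c * (φ (Ystar ω) (X ω) c - U (Y ω) (X ω) c))^2 ∂μ := by
      have hDint : ∀ c e : Fin d, Integrable
          (fun ω => w c * ((φ (Ystar ω) (X ω) c - U (Y ω) (X ω) c)
            * (φ (Ystar ω) (X ω) e - U (Y ω) (X ω) e)) * w e) μ :=
        fun c e => ((PramAux.int_mul (hD c) (hD e)).const_mul (w c)).mul_const (w e)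
      calc ∑ c : Fin d, ∑ e : Fin d, w c * Ediff c e * w e
          = ∑ c : Fin d, ∑ e : Fin d, ∫ ω,
              w c * ((φ (Ystar ω) (X ω) c - U (Y ω) (X ω) c)
                * (φ (Ystar ω) (X ω) e - U (Y ω) (X ω) e)) * w e ∂μ := by
            refine Finset.sum_congr rfl fun c _ => Finset.sum_congr rfl fun e _ => ?_
            rw [hEdiff, ← integral_const_mul, ← integral_mul_const]
        _ = ∫ ω, ∑ c : Fin d, ∑ e : Fin d,
              w c * ((φ (Ystar ω) (X ω) c - U (Y ω) (X ω) c)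
                * (φ (Ystar ω) (X ω) e - U (Y ω) (X ω) e)) * w e ∂μ := by
            rw [integral_finset_sum _ fun c _ =>
              integrable_finset_sum _ fun e _ => hDint c e]
            exact Finset.sum_congr rfl fun c _ =>
              (integral_finset_sum _ fun e _ => hDint c e).symm
        _ = ∫ ω, (∑ c : Fin d,
              w c * (φ (Ystar ω) (X ω) c - U (Y ω) (X ω) c))^2 ∂μ := by
            refine integral_congr_ae (.of_forall fun ω => ?_)
            dsimp only
            rw [sq, Finset.sum_mul_sum]
            exact Finset.sum_congr rfl fun c _ =>
              Finset.sum_congr rfl fun e _ => by ring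
    rw [h4]
    exact integral_nonneg fun ω => sq_nonneg _
end
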